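/- arXiv:1804.05738 — 11 statements merged into one kernel-verified Lean document; each statement's English description precedes it below -/
import Mathlib

section
/- Let A be an n×n complex matrix with characteristic polynomial χ_A, let v ∈ ℂⁿ be an eigenvector of A with A·v = λ·v, and let q ∈ ℂⁿ be an arbitrary vector. Then the rank-one update A + v·qᵀ satisfies the characteristic polynomial identity χ_{A + v qᵀ}(X)·(X − λ) = χ_A(X)·(X − (λ + qᵀv)); that is, the eigenvalues of A + v qᵀ are those of A with the eigenvalue λ replaced by λ + qᵀv. -/
/-!
Write `M = X·1 - A` for the characteristic matrix, `c = X - μ`, `u = v` and `w = -q` (as constant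
polynomials), so that `X·1 - (A + v qᵀ) = M + u wᵀ` and `M u = c u`. The eigenvector relation gives
`M (c·1 + u wᵀ) = c (M + u wᵀ)`, and the determinant of the scalar-plus-rank-one matrix
`c·1 + u wᵀ` is `c^(n-1) (c + wᵀu)` by the characteristic polynomial of a rank-one matrix.
Taking determinants and cancelling the regular element `c^n` of `R[X]` gives the identity, over
any commutative ring.
-/

open Polynomial Matrix

namespace Matrix

variable {R : Type*} [CommRing R] {n : Type*} [Fintype n] [DecidableEq n]

theorem det_smul_one_add_vecMulVec (c : R) (u w : n → R) :
    det (c • 1 + vecMulVec u w) =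
      c ^ Fintype.card n + (u ⬝ᵥ w) * c ^ (Fintype.card n - 1) := by
  have h := eval_charpoly (vecMulVec (-u) w) c
  rw [charpoly_vecMulVec] at h
  simpa [smul_one_eq_diagonal, sub_eq_add_neg] using h.symm

theorem mul_det_smul_one_add_vecMulVec (c : R) (u w : n → R) :
    c * det (c • 1 + vecMulVec u w) = c ^ Fintype.card n * (c + w ⬝ᵥ u) := by
  rw [det_smul_one_add_vecMulVec, dotProduct_comm]
  rcases isEmpty_or_nonempty n with _ | _
  · simp
  · obtain ⟨k, hk⟩ := Nat.exists_eq_add_of_lt (Fintype.card_pos (α := n))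
    rw [hk, zero_add, Nat.add_sub_cancel]
    ring

theorem det_add_vecMulVec_mul_of_mulVec_eq_smul {M : Matrix n n R} {u : n → R} {c : R}
    (hc : IsLeftRegular c) (hMu : M *ᵥ u = c • u) (w : n → R) :
    det (M + vecMulVec u w) * c = det M * (c + w ⬝ᵥ u) := by
  have hmul : M * (c • 1 + vecMulVec u w) = c • (M + vecMulVec u w) := by
    rw [Matrix.mul_add, mul_vecMulVec, hMu, smul_vecMulVec, Matrix.mul_smul, Matrix.mul_one,
      smul_add]
  apply (hc.pow (Fintype.card n))
  calc c ^ Fintype.card n * (det (M + vecMulVec u w) * c)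
      = det (M * (c • 1 + vecMulVec u w)) * c := by rw [hmul, det_smul]; ring
    _ = c ^ Fintype.card n * (det M * (c + w ⬝ᵥ u)) := by
      rw [det_mul, mul_assoc, mul_comm _ c, mul_det_smul_one_add_vecMulVec]; ring

theorem charmatrix_add_vecMulVec (A : Matrix n n R) (v q : n → R) :
    charmatrix (A + vecMulVec v q) = charmatrix A + vecMulVec (C ∘ v) (-(C ∘ q)) := by
  ext i j : 1
  simp only [charmatrix_apply, add_apply, vecMulVec_apply, Function.comp_apply, Pi.neg_apply,
    map_add, map_mul]
  ring

theorem charmatrix_mulVec_of_mulVec_eq_smul {A : Matrix n n R} {v : n → R} {μ : R}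
    (hAv : A *ᵥ v = μ • v) : charmatrix A *ᵥ (C ∘ v) = (X - C μ) • (C ∘ v) := by
  ext i : 1
  have hCAv := RingHom.map_mulVec C A v i
  rw [hAv] at hCAv
  simp only [charmatrix, sub_mulVec, RingHom.mapMatrix_apply, Pi.sub_apply, ← hCAv, scalar_apply,
    mulVec_diagonal, Pi.smul_apply, Function.comp_apply, smul_eq_mul, map_mul]
  ring

theorem charpoly_add_vecMulVec_mul_X_sub_C {A : Matrix n n R} {v : n → R} {μ : R}
    (hAv : A *ᵥ v = μ • v) (q : n → R) :
    (A + vecMulVec v q).charpoly * (X - C μ) = A.charpoly * (X - C (μ + q ⬝ᵥ v)) := by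
  rw [charpoly, charmatrix_add_vecMulVec, det_add_vecMulVec_mul_of_mulVec_eq_smul
    (monic_X_sub_C μ).isRegular.left (charmatrix_mulVec_of_mulVec_eq_smul hAv), charpoly,
    neg_dotProduct, ← RingHom.map_dotProduct, C_add]
  ring

end Matrix

theorem brauer_general {n : ℕ} (A : Matrix (Fin n) (Fin n) ℂ) (v q : Fin n → ℂ) (μ : ℂ)
    (hev : A.mulVec v = μ • v) :
    (A + vecMulVec v q).charpoly * (X - C μ) =
      A.charpoly * (X - C (μ + q ⬝ᵥ v)) :=
  charpoly_add_vecMulVec_mul_X_sub_C hev q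

/-- Brauer's theorem: a rank-one update `A + v qᵀ` along an eigenvector `v` of `A`
(with `A v = μ v`) replaces the eigenvalue `μ` by `μ + qᵀ v`, in the sense of the
characteristic polynomial identity
`χ_{A + v qᵀ}(X) (X − μ) = χ_A(X) (X − (μ + qᵀ v))`. -/
theorem brauer {n : ℕ} (A : Matrix (Fin n) (Fin n) ℂ) (v q : Fin n → ℂ) (μ : ℂ)
    (hv : v ≠ 0) (hev : A.mulVec v = μ • v) :
    (A + vecMulVec v q).charpoly * (X - C μ) =
      A.charpoly * (X - C (μ + q ⬝ᵥ v)) :=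
  brauer_general A v q μ hev
end

section
/- Let A be an n×n complex matrix with constant row sums λ₁ (i.e., A·e = λ₁·e where e is the all-ones vector), and suppose λ₁ is a simple root of the characteristic polynomial of A. Let q ∈ ℂⁿ be a vector with Σᵢ₌₁ⁿ qᵢ = 0. Then the matrix A + e·qᵀ is similar to A: there exists an invertible complex matrix S with S⁻¹(A + e·qᵀ)S = A. -/
open Polynomial Matrix


variable {n : ℕ}

lemma aux_vvmul (a b c d : Fin n → ℂ) :
    vecMulVec a b * vecMulVec c d = (b ⬝ᵥ c) • vecMulVec a d := by
  ext i j
  simp [mul_apply, vecMulVec_apply, dotProduct, Finset.mul_sum, Finset.sum_mul]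
  ring_nf
  apply Finset.sum_congr rfl
  intro k _
  ring

lemma aux_mul_vv (M : Matrix (Fin n) (Fin n) ℂ) (a b : Fin n → ℂ) :
    M * vecMulVec a b = vecMulVec (M.mulVec a) b := by
  ext i j
  simp [mul_apply, vecMulVec_apply, mulVec, dotProduct, Finset.sum_mul, mul_assoc]

lemma aux_vv_mul (M : Matrix (Fin n) (Fin n) ℂ) (a b : Fin n → ℂ) :
    vecMulVec a b * M = vecMulVec a (b ᵥ* M) := by
  ext i j
  simp [mul_apply, vecMulVec_apply, vecMul, dotProduct, Finset.mul_sum, mul_assoc]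

lemma aux_vv_smul (a b : Fin n → ℂ) (c : ℂ) :
    vecMulVec a (c • b) = c • vecMulVec a b := by
  ext i j; simp [vecMulVec_apply]; ring

lemma aux_smul_vv (a b : Fin n → ℂ) (c : ℂ) :
    vecMulVec (c • a) b = c • vecMulVec a b := by
  ext i j; simp [vecMulVec_apply]; ring

lemma aux_vv_add (a b c : Fin n → ℂ) :
    vecMulVec a (b + c) = vecMulVec a b + vecMulVec a c := by
  ext i j; simp [vecMulVec_apply]; ring

lemma transpose_smul_one (c : ℂ) :
    ((algebraMap ℂ (Matrix (Fin n) (Fin n) ℂ)) c)ᵀ = (algebraMap ℂ (Matrix (Fin n) (Fin n) ℂ)) c := by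
  rw [Algebra.algebraMap_eq_smul_one, transpose_smul, transpose_one]

lemma aux_aeval_transpose (A : Matrix (Fin n) (Fin n) ℂ) (p : ℂ[X]) :
    aeval Aᵀ p = (aeval A p)ᵀ := by
  induction p using Polynomial.induction_on' with
  | add p q hp hq => simp [hp, hq]
  | monomial k c =>
      simp only [aeval_monomial]
      rw [transpose_mul, transpose_pow]
      rw [transpose_smul_one, Algebra.commutes]

lemma aux_mulVec_pow (A : Matrix (Fin n) (Fin n) ℂ) (μ : ℂ) (x : Fin n → ℂ)
    (h : A.mulVec x = μ • x) (k : ℕ) : (A ^ k).mulVec x = μ ^ k • x := by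
  induction k with
  | zero => simp
  | succ k ih =>
      rw [pow_succ', ← mulVec_mulVec, ih, mulVec_smul, h, smul_smul, pow_succ']
      ring_nf

lemma aux_mulVec_aeval (A : Matrix (Fin n) (Fin n) ℂ) (μ : ℂ) (x : Fin n → ℂ)
    (h : A.mulVec x = μ • x) (p : ℂ[X]) :
    (aeval A p).mulVec x = p.eval μ • x := by
  induction p using Polynomial.induction_on' with
  | add p q hp hq => simp [add_mulVec, hp, hq, add_smul]
  | monomial k c =>
      simp only [aeval_monomial, ← mulVec_mulVec, aux_mulVec_pow A μ x h k]
      rw [mulVec_smul, Algebra.algebraMap_eq_smul_one, smul_mulVec, one_mulVec,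
        smul_smul]
      simp [mul_comm]

lemma aux_eig_const {n : ℕ} (A : Matrix (Fin n) (Fin n) ℂ) (lam : ℂ)
    (hsimple : A.charpoly.rootMultiplicity lam = 1)
    (e : Fin n → ℂ) (he : A.mulVec e = lam • e) (hene : ∀ k, e k = 1)
    (x : Fin n → ℂ) (hx : A.mulVec x = lam • x) (i j : Fin n) : x i = x j := by
  by_contra hne
  have hchar0 : A.charpoly ≠ 0 := (charpoly_monic A).ne_zero
  have hroot : A.charpoly.IsRoot lam := by
    rw [← Polynomial.rootMultiplicity_pos hchar0, hsimple]; norm_num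
  set g : ℂ[X] := A.charpoly /ₘ (X - C lam) with hg
  have hfac : (X - C lam) * g = A.charpoly := mul_divByMonic_eq_iff_isRoot.mpr hroot
  have hglam : g.eval lam ≠ 0 := by
    intro h0
    have hdvd : (X - C lam) ∣ g := dvd_iff_isRoot.mpr h0
    obtain ⟨h, hh⟩ := hdvd
    have : (X - C lam) ^ 2 ∣ A.charpoly := ⟨h, by rw [← hfac, hh]; ring⟩
    have := (le_rootMultiplicity_iff hchar0).mpr this
    omega
  set B : Matrix (Fin n) (Fin n) ℂ := lam • (1 : Matrix (Fin n) (Fin n) ℂ) - A with hB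
  have hBv : ∀ v : Fin n → ℂ, A.mulVec v = lam • v → B.mulVec v = 0 := by
    intro v hv
    rw [hB, sub_mulVec, smul_mulVec, one_mulVec, hv, sub_self]
  -- adjugate of B is zero
  have hadj : adjugate B = 0 := by
    ext a b
    rw [adjugate_apply]
    have : ∃ v, v ≠ 0 ∧ (B.updateRow b (Pi.single a 1)) *ᵥ v = 0 := by
      refine ⟨x - x a • e, ?_, ?_⟩
      · intro h0
        have hxe : x = x a • e := by rwa [sub_eq_zero] at h0
        apply hne
        rw [hxe]; simp [hene]
      · have hz : B.mulVec (x - x a • e) = 0 := by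
          rw [mulVec_sub, mulVec_smul, hBv x hx, hBv e he]; simp
        funext k
        have hrow : (B.updateRow b (Pi.single a 1) *ᵥ (x - x a • e)) k
            = B.updateRow b (Pi.single a 1) k ⬝ᵥ (x - x a • e) := rfl
        by_cases hk : k = b
        · rw [hrow, hk, updateRow_self]
          simp [dotProduct, Pi.single_apply, hene]
        · rw [hrow, updateRow_ne hk]
          have h5 : B k ⬝ᵥ (x - x a • e) = (B *ᵥ (x - x a • e)) k := rfl
          rw [h5, hz]
    rw [exists_mulVec_eq_zero_iff] at this
    rw [this]; rfl
  -- charmatrix and its adjugate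
  set M : Matrix (Fin n) (Fin n) ℂ[X] := charmatrix A with hM
  have hMmap : M.map (eval lam) = B := by
    ext a b
    by_cases hab : a = b <;>
      simp [hM, hB, charmatrix_apply, diagonal_apply, hab, Matrix.one_apply]
  have hMmap' : M.map ⇑(evalRingHom lam) = B := hMmap
  have hadjmap : (adjugate M).map ⇑(evalRingHom lam) = 0 := by
    have h3 := (evalRingHom lam).map_adjugate M
    rw [RingHom.mapMatrix_apply, RingHom.mapMatrix_apply] at h3
    rw [h3, hMmap', hadj]
  set N : Matrix (Fin n) (Fin n) ℂ[X] :=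
    Matrix.of (fun a b => adjugate M a b /ₘ (X - C lam)) with hNdef
  have hN : ∀ a b, (X - C lam) * N a b = adjugate M a b := by
    intro a b
    apply mul_divByMonic_eq_iff_isRoot.mpr
    show eval lam (adjugate M a b) = 0
    have h6 : ((adjugate M).map ⇑(evalRingHom lam)) a b = 0 := by rw [hadjmap]; rfl
    simpa using h6
  have hsmulN : (X - C lam) • N = adjugate M := by
    ext a b; rw [Matrix.smul_apply, smul_eq_mul, hN]
  have hNM : (X - C lam) • (N * M) = (X - C lam) • (g • (1 : Matrix (Fin n) (Fin n) ℂ[X])) := by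
    rw [← Matrix.smul_mul, hsmulN, adjugate_mul]
    have hdet : M.det = A.charpoly := rfl
    rw [hdet, ← hfac, smul_smul]
  have hNM' : N * M = g • (1 : Matrix (Fin n) (Fin n) ℂ[X]) := by
    refine Matrix.ext (fun a b => ?_)
    have h7 := congrFun (congrFun hNM a) b
    rw [Matrix.smul_apply, Matrix.smul_apply, smul_eq_mul, smul_eq_mul] at h7
    exact mul_left_cancel₀ (X_sub_C_ne_zero lam) h7
  -- map to ℂ
  have hmap : (N.map ⇑(evalRingHom lam)) * B = g.eval lam • (1 : Matrix (Fin n) (Fin n) ℂ) := by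
    have h8 := congrArg (fun (P : Matrix (Fin n) (Fin n) ℂ[X]) => P.map ⇑(evalRingHom lam)) hNM'
    simp only [Matrix.map_mul] at h8
    rw [hMmap'] at h8
    rw [h8]
    refine Matrix.ext (fun a b => ?_)
    simp only [Matrix.map_apply, Matrix.smul_apply, Matrix.one_apply, smul_eq_mul]
    split <;> simp
  have hxz : g.eval lam • x = 0 := by
    have := congrArg (fun (P : Matrix (Fin n) (Fin n) ℂ) => P.mulVec x) hmap
    simp only [← mulVec_mulVec, hBv x hx, mulVec_zero, smul_mulVec, one_mulVec] at this
    exact this.symm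
  have : x = 0 := by
    have := smul_eq_zero.mp hxz
    tauto
  apply hne
  rw [this]
  rfl


set_option maxHeartbeats 1000000 in
/-- If `A ∈ CS_{λ₁}` (constant row sums `λ₁`, i.e. `A e = λ₁ e`), `λ₁` is a simple
root of the characteristic polynomial of `A`, and `q` has entries summing to `0`,
then `A + e qᵀ` is similar to `A`. -/
theorem rank_one_update_similar {n : ℕ} (A : Matrix (Fin n) (Fin n) ℂ) (lam : ℂ)
    (q : Fin n → ℂ)
    (hrow : A.mulVec (fun _ => 1) = fun _ => lam)
    (hsimple : A.charpoly.rootMultiplicity lam = 1)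
    (hq : ∑ i, q i = 0) :
    ∃ S : Matrix (Fin n) (Fin n) ℂ, IsUnit S.det ∧
      S⁻¹ * (A + vecMulVec (fun _ => 1) q) * S = A := by
  set e : Fin n → ℂ := fun _ => 1 with hedef
  have he : A.mulVec e = lam • e := by
    rw [hrow]; funext k; simp [hedef]
  have hchar0 : A.charpoly ≠ 0 := (charpoly_monic A).ne_zero
  have hroot : A.charpoly.IsRoot lam := by
    rw [← Polynomial.rootMultiplicity_pos hchar0, hsimple]; norm_num
  set g : ℂ[X] := A.charpoly /ₘ (X - C lam) with hg
  have hfac : (X - C lam) * g = A.charpoly := mul_divByMonic_eq_iff_isRoot.mpr hroot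
  have hglam : g.eval lam ≠ 0 := by
    intro h0
    have hdvd : (X - C lam) ∣ g := dvd_iff_isRoot.mpr h0
    obtain ⟨h, hh⟩ := hdvd
    have : (X - C lam) ^ 2 ∣ A.charpoly := ⟨h, by rw [← hfac, hh]; ring⟩
    have := (le_rootMultiplicity_iff hchar0).mpr this
    omega
  -- Bezout certificate for coprimality of (X - lam) and g
  set c : ℂ := g.eval lam with hc
  set h' : ℂ[X] := (g - C c) /ₘ (X - C lam) with hh'
  have hfac2 : (X - C lam) * h' = g - C c := by
    apply mul_divByMonic_eq_iff_isRoot.mpr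
    simp [IsRoot, hc]
  set u : ℂ[X] := -(C c⁻¹ * h') with hu
  set v : ℂ[X] := C c⁻¹ with hv
  have hbez : u * (X - C lam) + v * g = 1 := by
    have h1 : u * (X - C lam) + v * g = C c⁻¹ * (g - (X - C lam) * h') := by
      rw [hu, hv]; ring
    rw [h1, hfac2, sub_sub_cancel, ← C_mul, inv_mul_cancel₀ hglam, C_1]
  set T : Matrix (Fin n) (Fin n) ℂ := Aᵀ with hT
  set R : Matrix (Fin n) (Fin n) ℂ := aeval A (v * g) with hR
  have haevalXC : aeval A (X - C lam) = A - lam • 1 := by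
    simp [Algebra.algebraMap_eq_smul_one]
  have hAR : (A - lam • 1) * R = 0 := by
    rw [← haevalXC, hR, ← _root_.map_mul]
    have h2 : (X - C lam) * (v * g) = v * A.charpoly := by rw [← hfac]; ring
    rw [h2, _root_.map_mul, aeval_self_charpoly, mul_zero]
  have hRcol : ∀ k : Fin n, A.mulVec (fun i => R i k) = lam • (fun i => R i k) := by
    intro k
    funext i
    have h0 := congrFun (congrFun hAR i) k
    have h1 : (A - lam • 1) * R = A * R - lam • R := by
      rw [sub_mul, Matrix.smul_mul, one_mul]
    rw [h1] at h0
    have h2 : (A * R) i k - lam * R i k = 0 := by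
      simpa [Matrix.sub_apply, Matrix.smul_apply] using h0
    have h3 : (A.mulVec (fun i => R i k)) i = (A * R) i k := by
      simp [mulVec, mul_apply, dotProduct]
    rw [h3]
    have : (A * R) i k = lam * R i k := by linear_combination h2
    rw [this]; rfl
  have hRconst : ∀ i j k : Fin n, R i k = R j k := by
    intro i j k
    exact aux_eig_const A lam hsimple e he (fun _ => rfl) (fun i' => R i' k) (hRcol k) i j
  set w : Fin n → ℂ := (aeval T u).mulVec q with hw
  have hRTq : (aeval T (v * g)).mulVec q = 0 := by
    rw [aux_aeval_transpose, ← hR]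
    funext i
    show (fun j => Rᵀ i j) ⬝ᵥ q = 0
    have h4 : ∀ j, Rᵀ i j = R i i := fun j => hRconst j i i
    calc (fun j => Rᵀ i j) ⬝ᵥ q = ∑ j, R i i * q j := by
          simp only [dotProduct]
          exact Finset.sum_congr rfl (fun j _ => by rw [h4 j])
      _ = R i i * ∑ j, q j := by rw [Finset.mul_sum]
      _ = 0 := by rw [hq, mul_zero]
  have hwq : (T - lam • 1).mulVec w = q := by
    have h5 := congrArg (aeval T) hbez
    rw [_root_.map_add, _root_.map_one, _root_.map_mul, _root_.map_mul] at h5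
    have h6 : aeval T u * aeval T (X - C lam) = aeval T (X - C lam) * aeval T u := by
      rw [← _root_.map_mul, ← _root_.map_mul, mul_comm]
    have h7 : aeval T (X - C lam) = T - lam • 1 := by
      simp [Algebra.algebraMap_eq_smul_one]
    rw [h6, h7] at h5
    have h8 := congrArg (fun M : Matrix (Fin n) (Fin n) ℂ => M.mulVec q) h5
    simp only [add_mulVec, one_mulVec, ← mulVec_mulVec] at h8
    rw [← hw] at h8
    have h9 : (aeval T v).mulVec ((aeval T g).mulVec q) = 0 := by
      rw [mulVec_mulVec, ← _root_.map_mul]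
      exact hRTq
    rw [h9] at h8
    simpa using h8
  have hwA : w ᵥ* A = q + lam • w := by
    have h10 : T.mulVec w - lam • w = q := by
      have := hwq
      rwa [sub_mulVec, smul_mulVec, one_mulVec] at this
    rw [hT] at h10
    rw [mulVec_transpose] at h10
    funext i
    have := congrFun h10 i
    simp only [Pi.sub_apply, Pi.smul_apply] at this
    simp only [Pi.add_apply, Pi.smul_apply]
    linear_combination this
  have hwe : w ⬝ᵥ e = 0 := by
    rw [dotProduct_comm, hw]
    have h11 : e ⬝ᵥ (aeval T u).mulVec q = (e ᵥ* (aeval T u)) ⬝ᵥ q := dotProduct_mulVec e _ q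
    rw [h11]
    have h12 : e ᵥ* (aeval T u) = (aeval T u)ᵀ.mulVec e := (mulVec_transpose _ e).symm
    rw [h12, aux_aeval_transpose, transpose_transpose, aux_mulVec_aeval A lam e he u,
      smul_dotProduct]
    have h13 : e ⬝ᵥ q = 0 := by simp [hedef, dotProduct, hq]
    rw [h13, smul_eq_mul, mul_zero]
  have hqe : q ⬝ᵥ e = 0 := by simp [hedef, dotProduct, hq]
  -- the similarity matrix
  set W : Matrix (Fin n) (Fin n) ℂ := vecMulVec e w with hW
  set Q : Matrix (Fin n) (Fin n) ℂ := vecMulVec e q with hQ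
  have hWW : W * W = 0 := by rw [hW, aux_vvmul, hwe, zero_smul]
  have hQW : Q * W = 0 := by rw [hQ, hW, aux_vvmul, hqe, zero_smul]
  have hWQ : W * Q = 0 := by rw [hW, hQ, aux_vvmul, hwe, zero_smul]
  have hAW : A * W = lam • W := by
    rw [hW, aux_mul_vv, he, aux_smul_vv]
  have hWA : W * A = Q + lam • W := by
    rw [hW, aux_vv_mul, hwA, aux_vv_add, aux_vv_smul]
  have hleft : (1 - W) * (1 + W) = 1 := by
    rw [sub_mul, one_mul, mul_add, mul_one, hWW, add_zero]
    abel
  refine ⟨1 + W, ?_, ?_⟩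
  · exact Matrix.isUnit_det_of_left_inverse (B := 1 - W) hleft
  · have hinv : (1 + W)⁻¹ = 1 - W := Matrix.inv_eq_left_inv hleft
    rw [hinv]
    have e1 : (A + Q) * (1 + W) = A + Q + lam • W := by
      rw [mul_add, mul_one, add_mul, hAW, hQW, add_zero]
    have e2 : (1 - W) * (A + Q + lam • W) = A := by
      rw [sub_mul, one_mul, mul_add, mul_add, hWA, hWQ, Matrix.mul_smul, hWW, smul_zero]
      abel
    rw [mul_assoc, e1, e2]
end

section
/- Let A be an n×n complex matrix that is non-scalar (A is not of the form c·I for a scalar c), and let γ₁, …, γₙ be complex numbers with γ₁ + ⋯ + γₙ = tr A. Then there exists an n×n complex matrix B similar to A (i.e., B = S⁻¹AS for some invertible S) whose diagonal entries are B_{ii} = γᵢ for i = 1, …, n. (Fillmore's theorem over ℂ.) -/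
/-!
Fillmore's argument, by induction on the size. A non-scalar `A` has a vector `v` with `v, Av`
linearly independent; in a basis beginning with `v, Av - γ₁ v` the first column of `A` becomes
`(γ₁, 1, 0, …, 0)`, so the first diagonal entry is `γ₁` and the principal block left after
deleting the first row and column has trace `γ₂ + ⋯ + γₙ`. If this block is scalar of size at
least two, replacing a third basis vector `e` by `e + v` keeps the first diagonal entry and puts a
nonzero entry off the diagonal of the block. The block is then non-scalar (or of size one), and
conjugating by a block-diagonal matrix built from the inductive step finishes the proof.
-/

open Module

section BasisExtension

variable {K V ι : Type*} [DivisionRing K] [AddCommGroup V] [Module K V] [FiniteDimensional K V]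
  [Fintype ι]

theorem exists_basis_eqOn_of_linearIndepOn (h : finrank K V = Fintype.card ι) {u : ι → V}
    {s : Set ι} (hu : LinearIndepOn K u s) : ∃ b : Basis ι K V, Set.EqOn b u s := by
  classical
  let B := Basis.extend hu.id_image
  let T := hu.id_image.extend (Set.subset_univ _)
  have : Fintype T := FiniteDimensional.fintypeBasisIndex B
  have hcard : Fintype.card ι = T.toFinset.card := by
    rw [Set.toFinset_card, ← h, finrank_eq_card_basis B]
  obtain ⟨g, hg⟩ := Set.MapsTo.exists_equiv_extend_of_card_eq hcard
    (fun i hi => Set.mem_toFinset.2 (hu.id_image.subset_extend _ (Set.mem_image_of_mem u hi)))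
    hu.injOn
  refine ⟨B.reindex (g.trans (Equiv.subtypeEquivRight fun _ => Set.mem_toFinset)).symm,
    fun i hi => ?_⟩
  simp [B, Basis.coe_extend, hg i hi]

end BasisExtension

namespace Matrix

section CommRing

variable {ι R : Type*} [DecidableEq ι] [CommRing R]

abbrev deleteRowCol {α : Type*} (A : Matrix ι ι α) (i₀ : ι) :
    Matrix {i // i ≠ i₀} {i // i ≠ i₀} α :=
  A.submatrix (↑) (↑)

theorem nontrivial_of_ne_smul_one {A : Matrix ι ι R} (hA : ∀ c : R, A ≠ c • 1) :
    Nontrivial ι := by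
  by_contra h
  rw [not_nontrivial_iff_subsingleton] at h
  cases isEmpty_or_nonempty ι with
  | inl _ => exact hA 0 (Subsingleton.elim _ _)
  | inr hne =>
    obtain ⟨i⟩ := hne
    exact hA (A i i) (by ext j k; simp [Subsingleton.elim j i, Subsingleton.elim k i])

variable [Fintype ι]

def HasSimilarWithDiag (A : Matrix ι ι R) (γ : ι → R) : Prop :=
  ∃ S : Matrix ι ι R, IsUnit S.det ∧ ∀ i, (S⁻¹ * A * S) i i = γ i

theorem HasSimilarWithDiag.of_conj {A P : Matrix ι ι R} {γ : ι → R} (hP : IsUnit P.det)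
    (h : (P⁻¹ * A * P).HasSimilarWithDiag γ) : A.HasSimilarWithDiag γ := by
  obtain ⟨S, hS, hd⟩ := h
  refine ⟨P * S, by rw [det_mul]; exact hP.mul hS, fun i => ?_⟩
  simpa only [Matrix.mul_inv_rev, Matrix.mul_assoc] using hd i

theorem hasSimilarWithDiag_of_subsingleton [Subsingleton ι] {A : Matrix ι ι R} {γ : ι → R}
    (h : ∑ i, γ i = A.trace) : A.HasSimilarWithDiag γ :=
  ⟨1, by simp, fun i => by simpa [trace, Fintype.sum_subsingleton _ i] using h.symm⟩

theorem HasSimilarWithDiag.of_submatrix_equiv {κ : Type*} [Fintype κ] [DecidableEq κ]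
    (e : κ ≃ ι) {A : Matrix ι ι R} {γ : ι → R}
    (h : (A.submatrix e e).HasSimilarWithDiag (γ ∘ e)) : A.HasSimilarWithDiag γ := by
  obtain ⟨S, hS, hd⟩ := h
  refine ⟨S.submatrix e.symm e.symm, by rwa [det_submatrix_equiv_self], fun i => ?_⟩
  have hA : A = (A.submatrix e e).submatrix e.symm e.symm := by simp
  rw [inv_submatrix_equiv, hA, submatrix_mul_equiv, submatrix_mul_equiv]
  simpa using hd (e.symm i)

theorem HasSimilarWithDiag.fromBlocks {m n : Type*} [Fintype m] [DecidableEq m] [Fintype n]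
    [DecidableEq n] {A : Matrix m m R} {D : Matrix n n R} {α : m → R} {δ : n → R}
    (hA : A.HasSimilarWithDiag α) (hD : D.HasSimilarWithDiag δ) (B : Matrix m n R)
    (C : Matrix n m R) : (Matrix.fromBlocks A B C D).HasSimilarWithDiag (Sum.elim α δ) := by
  obtain ⟨S₁, h₁, d₁⟩ := hA
  obtain ⟨S₂, h₂, d₂⟩ := hD
  refine ⟨Matrix.fromBlocks S₁ 0 0 S₂, by simpa [det_fromBlocks_zero₁₂] using h₁.mul h₂, ?_⟩
  rw [inv_fromBlocks_zero₁₂_of_isUnit_iff _ _ _ (by simp [isUnit_iff_isUnit_det, h₁, h₂])]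
  rintro (i | i) <;> simp [fromBlocks_multiply, d₁, d₂]

theorem hasSimilarWithDiag_of_blocks {m n : Type*} [Fintype m] [DecidableEq m] [Fintype n]
    [DecidableEq n] (e : m ⊕ n ≃ ι) {A : Matrix ι ι R} {γ : ι → R}
    (h₁ : (A.submatrix (e ∘ Sum.inl) (e ∘ Sum.inl)).HasSimilarWithDiag (γ ∘ e ∘ Sum.inl))
    (h₂ : (A.submatrix (e ∘ Sum.inr) (e ∘ Sum.inr)).HasSimilarWithDiag (γ ∘ e ∘ Sum.inr)) :
    A.HasSimilarWithDiag γ := by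
  refine .of_submatrix_equiv e ?_
  rw [← fromBlocks_toBlocks (A.submatrix e e), ← Sum.elim_comp_inl_inr (γ ∘ e)]
  exact h₁.fromBlocks h₂ _ _

theorem HasSimilarWithDiag.of_apply_eq_of_deleteRowCol {A : Matrix ι ι R} {γ : ι → R} (i₀ : ι)
    (h₀ : A i₀ i₀ = γ i₀) (h : (A.deleteRowCol i₀).HasSimilarWithDiag fun i => γ i) :
    A.HasSimilarWithDiag γ :=
  hasSimilarWithDiag_of_blocks (Equiv.sumCompl (· = i₀))
    (hasSimilarWithDiag_of_subsingleton (by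
      rw [trace, Fintype.sum_subsingleton _ ⟨i₀, rfl⟩, Fintype.sum_subsingleton _ ⟨i₀, rfl⟩]
      exact h₀.symm)) h

theorem trace_eq_add_trace_deleteRowCol (A : Matrix ι ι R) (i₀ : ι) :
    A.trace = A i₀ i₀ + (A.deleteRowCol i₀).trace :=
  Fintype.sum_eq_add_sum_subtype_ne _ i₀

theorem inv_transvection {i j : ι} (hij : i ≠ j) (c : R) :
    (transvection i j c)⁻¹ = transvection i j (-c) :=
  inv_eq_left_inv (by rw [transvection_mul_transvection_same _ _ hij, neg_add_cancel,
    transvection_zero])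

theorem transvection_neg_mul_mul_transvection_apply_self {i j : ι} (hij : i ≠ j) (c : R)
    (M : Matrix ι ι R) :
    (transvection i j (-c) * M * transvection i j c) i i = M i i - c * M j i := by
  rw [mul_transvection_apply_of_ne _ _ _ _ hij, transvection_mul_apply_same]
  ring

theorem transvection_neg_mul_mul_transvection_apply_of_ne {i j k : ι} (hk : k ≠ i) (c : R)
    (M : Matrix ι ι R) :
    (transvection i j (-c) * M * transvection i j c) k j = M k j + c * M k i := by
  rw [mul_transvection_apply_same, transvection_mul_apply_of_ne _ _ _ _ hk,
    transvection_mul_apply_of_ne _ _ _ _ hk]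

theorem deleteRowCol_transvection_conj_ne_smul_one [Nontrivial R] {M : Matrix ι ι R}
    {i₀ i₁ i₂ : ι} (h₁₀ : i₁ ≠ i₀) (h₂₀ : i₂ ≠ i₀) (h₂₁ : i₂ ≠ i₁) (hM : M i₁ i₀ = 1) {c : R}
    (hc : M.deleteRowCol i₀ = c • 1) (d : R) :
    (transvection i₀ i₂ (-1) * M * transvection i₀ i₂ 1).deleteRowCol i₀ ≠ d • 1 := by
  intro hd
  have h₁₂ := congrFun (congrFun hd ⟨i₁, h₁₀⟩) ⟨i₂, h₂₀⟩
  have hc₁₂ := congrFun (congrFun hc ⟨i₁, h₁₀⟩) ⟨i₂, h₂₀⟩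
  simp only [submatrix_apply, transvection_neg_mul_mul_transvection_apply_of_ne h₁₀] at h₁₂ hc₁₂
  simp [hc₁₂, hM, h₂₁.symm] at h₁₂

theorem exists_linearIndependent_pair_mulVec [IsDomain R] {A : Matrix ι ι R}
    (hA : ∀ c : R, A ≠ c • 1) : ∃ v, LinearIndependent R ![v, A *ᵥ v] := by
  by_contra! h
  obtain ⟨c, hc⟩ := (mulVecLin A).exists_eq_smul_id_of_forall_notLinearIndependent h
  refine hA c (ext fun i j => ?_)
  simpa [mulVec_single_one, one_apply, Pi.single_apply, eq_comm] using
    congrFun (LinearMap.congr_fun hc (Pi.single j 1)) i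

end CommRing

section Field

variable {ι K : Type*} [Fintype ι] [DecidableEq ι] [Field K]

theorem exists_conj_mulVec_single_eq {A : Matrix ι ι K} {v : ι → K}
    (hv : LinearIndependent K ![v, A *ᵥ v]) {i₀ i₁ : ι} (h : i₀ ≠ i₁) (γ₀ : K) :
    ∃ S : Matrix ι ι K, IsUnit S.det ∧
      (S⁻¹ * A * S) *ᵥ Pi.single i₀ 1 = γ₀ • Pi.single i₀ 1 + Pi.single i₁ 1 := by
  set w := -γ₀ • v + A *ᵥ v
  have hvw : LinearIndependent K ![v, w] := (LinearIndependent.pair_add_smul_right_iff _).2 hv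
  let u : ι → ι → K := fun i => if i = i₀ then v else w
  have hu : LinearIndepOn K u {i₀, i₁} := by
    rw [LinearIndepOn.pair_iff u h]
    simpa [u, h.symm] using LinearIndependent.pair_iff.1 hvw
  obtain ⟨b, hb⟩ := exists_basis_eqOn_of_linearIndepOn (by simp) hu
  let S := (Pi.basisFun K ι).toMatrix b
  have hSe : ∀ i, S *ᵥ Pi.single i 1 = b i := by
    intro i; ext k; simp [S, Basis.toMatrix_apply]
  have hS : IsUnit S.det := by
    have := (Pi.basisFun K ι).invertibleToMatrix b
    exact isUnit_det_of_invertible S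
  refine ⟨S, hS, ?_⟩
  have hAS : A *ᵥ (S *ᵥ Pi.single i₀ 1) = S *ᵥ (γ₀ • Pi.single i₀ 1 + Pi.single i₁ 1) := by
    rw [mulVec_add, mulVec_smul, hSe, hSe, hb (by simp), hb (by simp)]
    simp [u, h.symm, w]
  rw [← mulVec_mulVec, ← mulVec_mulVec, hAS, mulVec_mulVec, nonsing_inv_mul _ hS, one_mulVec]

theorem exists_conj_apply_eq_and_deleteRowCol_ne_smul_one {A : Matrix ι ι K}
    (hA : ∀ c : K, A ≠ c • 1) (i₀ : ι) (γ₀ : K) :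
    ∃ P : Matrix ι ι K, IsUnit P.det ∧ (P⁻¹ * A * P) i₀ i₀ = γ₀ ∧
      (Subsingleton {i // i ≠ i₀} ∨ ∀ c : K, (P⁻¹ * A * P).deleteRowCol i₀ ≠ c • 1) := by
  have := nontrivial_of_ne_smul_one hA
  obtain ⟨i₁, h₁₀⟩ := exists_ne i₀
  obtain ⟨v, hv⟩ := exists_linearIndependent_pair_mulVec hA
  obtain ⟨S, hS, hcol⟩ := exists_conj_mulVec_single_eq hv h₁₀.symm γ₀
  set M := S⁻¹ * A * S
  have hM : ∀ i, M i i₀ = (γ₀ • Pi.single i₀ 1 + Pi.single i₁ 1 : ι → K) i := fun i => by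
    rw [← hcol, mulVec_single_one]
    rfl
  have hM₀ : M i₀ i₀ = γ₀ := by simp [hM, h₁₀.symm]
  by_cases hC : Subsingleton {i // i ≠ i₀} ∨ ∀ c : K, M.deleteRowCol i₀ ≠ c • 1
  · exact ⟨S, hS, hM₀, hC⟩
  push Not at hC
  obtain ⟨hnt, c, hc⟩ := hC
  obtain ⟨i₂, h₂₀, h₂₁⟩ : ∃ i₂, i₂ ≠ i₀ ∧ i₂ ≠ i₁ := by
    by_contra! h
    exact not_subsingleton {i // i ≠ i₀} ⟨fun a b => Subtype.ext ((h a a.2).trans (h b b.2).symm)⟩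
  have hT : IsUnit (transvection i₀ i₂ (1 : K)).det := by
    simp [det_transvection_of_ne _ _ h₂₀.symm]
  have hconj : (S * transvection i₀ i₂ 1)⁻¹ * A * (S * transvection i₀ i₂ 1) =
      transvection i₀ i₂ (-1) * M * transvection i₀ i₂ 1 := by
    simp only [Matrix.mul_inv_rev, inv_transvection h₂₀.symm, M, Matrix.mul_assoc]
  refine ⟨S * transvection i₀ i₂ 1, by rw [det_mul]; exact hS.mul hT, ?_, Or.inr ?_⟩
  · rw [hconj, transvection_neg_mul_mul_transvection_apply_self h₂₀.symm, hM₀, hM]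
    simp [h₂₀, h₂₁]
  · rw [hconj]
    exact deleteRowCol_transvection_conj_ne_smul_one h₁₀ h₂₀ h₂₁ (by simp [hM, h₁₀]) hc

theorem hasSimilarWithDiag_of_ne_smul_one {A : Matrix ι ι K} (hA : ∀ c : K, A ≠ c • 1)
    {γ : ι → K} (hγ : ∑ i, γ i = A.trace) : A.HasSimilarWithDiag γ := by
  induction h : Fintype.card ι using Nat.strong_induction_on generalizing ι with
  | _ n ih =>
  have := nontrivial_of_ne_smul_one hA
  obtain ⟨i₀⟩ : Nonempty ι := inferInstance
  obtain ⟨P, hP, h₀, hC⟩ := exists_conj_apply_eq_and_deleteRowCol_ne_smul_one hA i₀ (γ i₀)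
  refine .of_conj hP (.of_apply_eq_of_deleteRowCol i₀ h₀ ?_)
  have htr : ∑ i : {i // i ≠ i₀}, γ i = ((P⁻¹ * A * P).deleteRowCol i₀).trace := by
    have := trace_eq_add_trace_deleteRowCol (P⁻¹ * A * P) i₀
    rw [trace_conj' ((isUnit_iff_isUnit_det P).2 hP), ← hγ,
      Fintype.sum_eq_add_sum_subtype_ne _ i₀, h₀] at this
    exact add_left_cancel this
  rcases hC with hC | hC
  · exact hasSimilarWithDiag_of_subsingleton htr
  · exact ih _ (h ▸ Fintype.card_subtype_lt (p := (· ≠ i₀)) (not_not.2 rfl)) hC htr rfl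

end Field

end Matrix

open Polynomial Matrix

/-- Fillmore's theorem over ℂ: if `A` is a non-scalar `n × n` complex matrix and
`γ₁ + ⋯ + γₙ = tr A`, then some matrix `B = S⁻¹ A S` similar to `A` has diagonal
entries `γ₁, …, γₙ`. -/
theorem fillmore {n : ℕ} (A : Matrix (Fin n) (Fin n) ℂ)
    (hA : ∀ c : ℂ, A ≠ c • (1 : Matrix (Fin n) (Fin n) ℂ))
    (γ : Fin n → ℂ) (hγ : ∑ i, γ i = A.trace) :
    ∃ S : Matrix (Fin n) (Fin n) ℂ, IsUnit S.det ∧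
      ∀ i, (S⁻¹ * A * S) i i = γ i :=
  hasSimilarWithDiag_of_ne_smul_one hA hγ
end

section
/- Let A = (a_{ij}) be an n×n non-scalar complex matrix, and suppose A has an eigenvector x = (x₁, …, xₙ) with A·x = λ·x, all entries xᵢ ≠ 0, and λ a simple root of the characteristic polynomial of A. Let γ₁, …, γₙ be complex numbers with γ₁ + ⋯ + γₙ = tr A. Then there exists a matrix B similar to A with diagonal entries B_{ii} = γᵢ for i = 1, …, n; explicitly, one may take B = D⁻¹AD + e·qᵀ, where D = diag(x₁, …, xₙ), e is the all-ones vector, and qᵢ = γᵢ − a_{ii}. -/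
/-!
Conjugating by `D = diag x` gives `C = D⁻¹AD` with the same diagonal as `A` and `C e = λ e`, and
`B = C + e qᵀ` with `qᵀ e = 0` because `∑ γᵢ = tr A`. As `λ` is a simple eigenvalue,
`ker (C - λ) = span e` and `e ∉ range (C - λ)`; hence some `r` has `rᵀ (C - λ) = qᵀ` and `rᵀ e = 0`.
Then `E = e rᵀ` squares to zero and `(1 + E) C (1 - E) = C + e rᵀ (C - λ) = B`.
-/

open Matrix Module

namespace Module.End

variable {K V : Type*} [Field K] [AddCommGroup V] [Module K V] [FiniteDimensional K V]
  {φ : End K V} {μ : K} {v : V}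

theorem maxGenEigenspace_eq_span_singleton (hμ : φ.charpoly.rootMultiplicity μ = 1)
    (hv : v ≠ 0) (hφv : φ v = μ • v) : φ.maxGenEigenspace μ = K ∙ v := by
  refine (Submodule.eq_of_le_of_finrank_eq ?_ ?_).symm
  · rw [Submodule.span_singleton_le_iff_mem]
    exact eigenspace_le_maxGenEigenspace (mem_eigenspace_iff.2 hφv)
  · rw [finrank_span_singleton hv, LinearMap.finrank_maxGenEigenspace_eq, hμ]

theorem notMem_range_sub_smul_one (hμ : φ.charpoly.rootMultiplicity μ = 1)
    (hv : v ≠ 0) (hφv : φ v = μ • v) : v ∉ LinearMap.range (φ - μ • 1) := by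
  rintro ⟨w, hw⟩
  have hw₂ : w ∈ K ∙ v := by
    rw [← maxGenEigenspace_eq_span_singleton hμ hv hφv, mem_maxGenEigenspace]
    exact ⟨2, by simp [pow_two, hw, hφv]⟩
  obtain ⟨c, rfl⟩ := Submodule.mem_span_singleton.1 hw₂
  exact hv (by simpa [hφv] using hw.symm)

theorem exists_dual_comp_sub_smul_one_eq (hμ : φ.charpoly.rootMultiplicity μ = 1)
    (hv : v ≠ 0) (hφv : φ v = μ • v) (q : Dual K V) (hq : q v = 0) :
    ∃ r : Dual K V, r ∘ₗ (φ - μ • 1) = q ∧ r v = 0 := by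
  have hker : LinearMap.ker (φ - μ • 1) = K ∙ v := by
    refine le_antisymm ?_ ?_
    · rw [← maxGenEigenspace_eq_span_singleton hμ hv hφv]
      intro w hw
      exact (mem_maxGenEigenspace _ _ _).2 ⟨1, by simpa using hw⟩
    · simp [Submodule.span_singleton_le_iff_mem, hφv]
  obtain ⟨r₀, hr₀⟩ : q ∈ LinearMap.range (φ - μ • 1).dualMap := by
    rw [LinearMap.range_dualMap_eq_dualAnnihilator_ker, hker]
    refine (Submodule.mem_dualAnnihilator _).2 fun w hw ↦ ?_
    obtain ⟨c, rfl⟩ := Submodule.mem_span_singleton.1 hw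
    simp [hq]
  obtain ⟨f, hfv, hf⟩ :=
    Submodule.exists_dual_map_eq_bot_of_notMem (notMem_range_sub_smul_one hμ hv hφv) inferInstance
  refine ⟨r₀ - (r₀ v / f v) • f, ?_, by simp [hfv]⟩
  ext w
  have hfw : f ((φ - μ • 1) w) = 0 :=
    (Submodule.eq_bot_iff _).1 hf _ (Submodule.mem_map_of_mem (LinearMap.mem_range_self _ w))
  rw [LinearMap.sub_comp, LinearMap.smul_comp, LinearMap.sub_apply, LinearMap.smul_apply,
    LinearMap.comp_apply f, hfw, smul_zero, sub_zero, ← hr₀]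
  rfl

end Module.End

namespace Matrix

section CommRing

variable {n R : Type*} [Fintype n] [DecidableEq n] [CommRing R] {C : Matrix n n R} {μ : R}
  {e r : n → R}

theorem one_add_vecMulVec_mul_one_sub (hre : r ⬝ᵥ e = 0) :
    (1 + vecMulVec e r) * (1 - vecMulVec e r) = 1 := by
  rw [mul_sub, mul_one, add_mul, one_mul, vecMulVec_mul_vecMulVec, hre, zero_smul,
    vecMulVec_zero, add_zero, add_sub_cancel_right]

theorem one_add_vecMulVec_mul_mul_one_sub (hCe : C *ᵥ e = μ • e) (hre : r ⬝ᵥ e = 0) :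
    (1 + vecMulVec e r) * C * (1 - vecMulVec e r) = C + vecMulVec e (r ᵥ* (C - μ • 1)) := by
  have hCE : C * vecMulVec e r = μ • vecMulVec e r := by
    rw [mul_vecMulVec, hCe, smul_vecMulVec]
  have hEE : vecMulVec e r * vecMulVec e r = 0 := by
    rw [vecMulVec_mul_vecMulVec, hre, zero_smul, vecMulVec_zero]
  have hEC : vecMulVec e r * C = vecMulVec e (r ᵥ* C) := vecMulVec_mul e r C
  have hexpand : (1 + vecMulVec e r) * C * (1 - vecMulVec e r)
      = C - C * vecMulVec e r + vecMulVec e r * C - vecMulVec e r * C * vecMulVec e r := by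
    noncomm_ring
  rw [hexpand, Matrix.mul_assoc, hCE, Matrix.mul_smul, hEE, smul_zero, sub_zero, hEC, vecMul_sub,
    vecMul_smul, vecMul_one, vecMulVec_sub, vecMulVec_smul]
  abel

end CommRing

variable {n K : Type*} [Fintype n] [DecidableEq n] [Field K] {C : Matrix n n K} {μ : K}
  {e : n → K}

theorem exists_vecMul_sub_smul_one_eq (hμ : C.charpoly.rootMultiplicity μ = 1) (he : e ≠ 0)
    (hCe : C *ᵥ e = μ • e) (q : n → K) (hq : q ⬝ᵥ e = 0) :
    ∃ r, r ᵥ* (C - μ • 1) = q ∧ r ⬝ᵥ e = 0 := by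
  obtain ⟨r, hr, hre⟩ := Module.End.exists_dual_comp_sub_smul_one_eq (φ := toLin' C)
    (by rwa [charpoly_toLin']) he (by simpa using hCe) (dotProductEquiv K n q) hq
  have hdot (w : n → K) : (dotProductEquiv K n).symm r ⬝ᵥ w = r w :=
    LinearMap.congr_fun ((dotProductEquiv K n).apply_symm_apply r) w
  refine ⟨(dotProductEquiv K n).symm r, (dotProductEquiv K n).injective ?_, by rw [hdot, hre]⟩
  refine LinearMap.ext fun w ↦ ?_
  rw [dotProductEquiv_apply_apply, ← dotProduct_mulVec, hdot, ← hr]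
  simp [sub_mulVec, smul_mulVec]

theorem exists_conj_eq_add_vecMulVec (hμ : C.charpoly.rootMultiplicity μ = 1)
    (hCe : C *ᵥ e = μ • e) (q : n → K) (hq : q ⬝ᵥ e = 0) :
    ∃ S : Matrix n n K, IsUnit S.det ∧ S⁻¹ * C * S = C + vecMulVec e q := by
  rcases eq_or_ne e 0 with rfl | he
  · exact ⟨1, by simp, by simp⟩
  obtain ⟨r, hrq, hre⟩ := exists_vecMul_sub_smul_one_eq hμ he hCe q hq
  have hS := one_add_vecMulVec_mul_one_sub hre
  refine ⟨1 - vecMulVec e r, isUnit_det_of_left_inverse hS, ?_⟩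
  rw [inv_eq_left_inv hS, one_add_vecMulVec_mul_mul_one_sub hCe hre, hrq]

end Matrix

theorem soto_julio_fillmore_general {n : ℕ} (A : Matrix (Fin n) (Fin n) ℂ)
    (x : Fin n → ℂ) (lam : ℂ) (hx : ∀ i, x i ≠ 0)
    (hev : A.mulVec x = lam • x)
    (hsimple : A.charpoly.rootMultiplicity lam = 1)
    (γ : Fin n → ℂ) (hγ : ∑ i, γ i = A.trace)
    (B : Matrix (Fin n) (Fin n) ℂ)
    (hB : B = (Matrix.diagonal x)⁻¹ * A * Matrix.diagonal x
          + vecMulVec (fun _ => 1) (fun i => γ i - A i i)) :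
    (∃ S : Matrix (Fin n) (Fin n) ℂ, IsUnit S.det ∧ S⁻¹ * A * S = B) ∧
      ∀ i, B i i = γ i := by
  set D := diagonal x
  have hD : IsUnit D.det := by
    rw [det_diagonal]
    exact (Finset.prod_ne_zero_iff.2 fun i _ ↦ hx i).isUnit
  have hDe : D *ᵥ (fun _ ↦ 1) = x := by ext i; simp [D, mulVec_diagonal]
  have hCe : (D⁻¹ * A * D) *ᵥ (fun _ ↦ 1) = lam • (fun _ ↦ 1) := by
    rw [← mulVec_mulVec, hDe, ← mulVec_mulVec, hev, mulVec_smul, ← hDe, mulVec_mulVec,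
      nonsing_inv_mul _ hD, one_mulVec]
  have hchar : (D⁻¹ * A * D).charpoly = A.charpoly := by
    rw [charpoly_mul_comm, ← Matrix.mul_assoc, mul_nonsing_inv _ hD, Matrix.one_mul]
  have hDinv : D⁻¹ = diagonal x⁻¹ :=
    inv_eq_left_inv (by simp [D, diagonal_mul_diagonal, inv_mul_cancel₀ (hx _)])
  have hdiag (i : Fin n) : (D⁻¹ * A * D) i i = A i i := by
    simp [hDinv, D, mul_comm _ (x i), hx i]
  have hq : (fun i ↦ γ i - A i i) ⬝ᵥ (fun _ ↦ 1) = 0 := by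
    simp [dotProduct, Finset.sum_sub_distrib, hγ, trace]
  obtain ⟨S, hS, hSA⟩ := exists_conj_eq_add_vecMulVec (hchar ▸ hsimple) hCe _ hq
  subst hB
  refine ⟨⟨D * S, by rw [det_mul]; exact hD.mul hS, ?_⟩, fun i ↦ by simp [hdiag, vecMulVec_apply]⟩
  rw [Matrix.mul_inv_rev, ← hSA]
  simp only [Matrix.mul_assoc]

/-- Julio–Soto construction: if `A` is non-scalar with an eigenvector `x` having all
entries nonzero (for a simple eigenvalue `lam`), and `∑ γᵢ = tr A`, then
`B = D⁻¹ A D + e qᵀ` (with `D = diag(x)`, `qᵢ = γᵢ − aᵢᵢ`) is similar to `A` and has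
diagonal entries `γ₁, …, γₙ`. -/
theorem soto_julio_fillmore {n : ℕ} (A : Matrix (Fin n) (Fin n) ℂ)
    (hA : ∀ c : ℂ, A ≠ c • (1 : Matrix (Fin n) (Fin n) ℂ))
    (x : Fin n → ℂ) (lam : ℂ) (hx : ∀ i, x i ≠ 0)
    (hev : A.mulVec x = lam • x)
    (hsimple : A.charpoly.rootMultiplicity lam = 1)
    (γ : Fin n → ℂ) (hγ : ∑ i, γ i = A.trace)
    (B : Matrix (Fin n) (Fin n) ℂ)
    (hB : B = (Matrix.diagonal x)⁻¹ * A * Matrix.diagonal x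
          + vecMulVec (fun _ => 1) (fun i => γ i - A i i)) :
    (∃ S : Matrix (Fin n) (Fin n) ℂ, IsUnit S.det ∧ S⁻¹ * A * S = B) ∧
      ∀ i, B i i = γ i :=
  soto_julio_fillmore_general A x lam hx hev hsimple γ hγ B hB
end

section
/- Let λ₁, λ₂, …, λₙ be complex numbers such that λ₁ is real, the multiset {λ₁, …, λₙ} is closed under complex conjugation, and for i = 2, …, n one has Re λᵢ ≤ 0 and |Re λᵢ| ≥ |Im λᵢ|. Let γ₁, …, γₙ be nonnegative real numbers with γ₁ + ⋯ + γₙ = λ₁ + ⋯ + λₙ. Then there exists an n×n entrywise nonnegative real matrix B with constant row sums λ₁ (B·e = λ₁·e), with diagonal entries B_{ii} = γᵢ for i = 1, …, n, and with spectrum {λ₁, …, λₙ}, i.e., the characteristic polynomial of B, viewed over ℂ, equals ∏ᵢ₌₁ⁿ (X − λᵢ). -/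
/-!
Pair every non-real `λᵢ` (`i ≥ 2`) with a conjugate `λ_{σ i}`. The real matrix `A` that is block
diagonal with the block `[[a, -b], [b, a]]` for each pair `a ± bi` and `(a)` for each real `λᵢ`
has spectrum `λ₂, …, λₙ`. Border it: row `1` is `(*, v)` and row `i + 1` is `(*, v + Aᵢ)`, with
`vⱼ = γⱼ₊₁ - Re λⱼ₊₁` and the first column chosen so that every row sums to `λ₁`. Adding all
columns of `X - B` to the first and subtracting its first row from the others deflates the
eigenvalue `λ₁` and leaves `X - A`. The entries of `B` are nonnegative because
`|Im λᵢ| ≤ -Re λᵢ`, and the trace condition makes `B₁₁ = γ₁`.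
-/

open Polynomial Matrix

theorem Fintype.exists_perm_apply_eq_of_map_univ_val_eq {ι α : Type*} [Fintype ι] {f g : ι → α}
    (h : Finset.univ.val.map f = Finset.univ.val.map g) :
    ∃ π : Equiv.Perm ι, ∀ i, g (π i) = f i := by
  classical
  have hcard (c : α) : Fintype.card {i // f i = c} = Fintype.card {i // g i = c} := by
    simp only [Fintype.card_subtype, Finset.card_def, Finset.filter_val,
      ← Multiset.countP_map _ _ (· = c), h]
  exact ⟨Equiv.ofFiberEquiv fun c => Fintype.equivOfCardEq (hcard c), Equiv.ofFiberEquiv_map _⟩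

theorem Complex.exists_involutive_perm_conj {ι : Type*} [Fintype ι] (μ : ι → ℂ)
    (hμ : (Finset.univ.val.map μ).map (starRingEnd ℂ) = Finset.univ.val.map μ) :
    ∃ σ : Equiv.Perm ι, Function.Involutive σ ∧ ∀ i, μ (σ i) = starRingEnd ℂ (μ i) := by
  rw [Multiset.map_map] at hμ
  obtain ⟨π, hπ⟩ := Fintype.exists_perm_apply_eq_of_map_univ_val_eq hμ
  have hπ_symm (i : ι) : μ (π.symm i) = starRingEnd ℂ (μ i) := by
    rw [← Equiv.apply_symm_apply π i, hπ, Function.comp_apply, Complex.conj_conj,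
      Equiv.apply_symm_apply]
  -- `π` maps each fibre of `μ` onto the fibre of the conjugate value; use it on the upper
  -- half-plane and its inverse on the lower one, so that the result is an involution.
  let s : ι → ι := fun i =>
    if 0 < (μ i).im then π i else if (μ i).im < 0 then π.symm i else i
  have hs (i : ι) : μ (s i) = starRingEnd ℂ (μ i) := by
    simp only [s]
    split_ifs
    · exact hπ i
    · exact hπ_symm i
    · exact (Complex.conj_eq_iff_im.mpr (by linarith)).symm
  have hs_inv : Function.Involutive s := by
    intro i
    have him : (μ (s i)).im = -(μ i).im := by rw [hs, Complex.conj_im]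
    simp only [s] at him ⊢
    split_ifs at him ⊢ <;> first | simp | linarith
  exact ⟨hs_inv.toPerm, hs_inv, hs⟩

theorem Multiset.map_univ_val_succ_eq_of_map_univ_val_eq {α : Type*} {m : ℕ}
    {f : Fin (m + 1) → α} {τ : α → α} (h0 : τ (f 0) = f 0)
    (h : (Finset.univ.val.map f).map τ = Finset.univ.val.map f) :
    (Finset.univ.val.map fun i : Fin m => f i.succ).map τ =
      Finset.univ.val.map fun i : Fin m => f i.succ := by
  simp only [Fin.univ_val_map, List.ofFn_succ, ← Multiset.cons_coe, Multiset.map_cons, h0,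
    Multiset.cons_inj_right] at h ⊢
  exact h

namespace Matrix

section CommRing

variable {R : Type*} [CommRing R]

theorem charpoly_eq_of_mul_eq_mul {n : Type*} [Fintype n] [DecidableEq n] {A T W : Matrix n n R}
    (hW : IsUnit W.det) (h : A * W = W * T) : A.charpoly = T.charpoly :=
  calc A.charpoly = (W⁻¹ * A * W).charpoly := (charpoly_units_conj' (nonsingInvUnit W hW) A).symm
    _ = T.charpoly := by
      rw [Matrix.mul_assoc, h, ← Matrix.mul_assoc, nonsing_inv_mul _ hW, Matrix.one_mul]

variable {m : ℕ}

theorem det_succ_of_forall_apply_succ_zero {M : Matrix (Fin (m + 1)) (Fin (m + 1)) R}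
    (h : ∀ i : Fin m, M i.succ 0 = 0) : M.det = M 0 0 * (M.submatrix Fin.succ Fin.succ).det := by
  rw [det_succ_column_zero, Fin.sum_univ_succ, Finset.sum_eq_zero fun i _ => by rw [h i]; ring]
  simp

theorem charpoly_eq_X_sub_C_mul_of_mulVec_one (B : Matrix (Fin (m + 1)) (Fin (m + 1)) R) {ρ : R}
    (hB : B *ᵥ (fun _ => 1) = fun _ => ρ) :
    B.charpoly = (X - C ρ) * (of fun i j : Fin m => B i.succ j.succ - B 0 j.succ).charpoly := by
  have hrow (i) : ∑ j, B.charmatrix i j = X - C ρ := by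
    have hBi := congrFun hB i
    simp only [mulVec, dotProduct, mul_one] at hBi
    simp [charmatrix_apply, Finset.sum_sub_distrib, ← map_sum, hBi, diagonal_apply]
  set N := B.charmatrix.updateCol 0 fun _ => X - C ρ
  have hN : N.det = B.charpoly := by
    have := det_updateCol_sum B.charmatrix 0 fun _ => 1
    simp only [one_smul, hrow] at this
    exact this
  set M := of fun i j => N i j - if i = 0 then 0 else N 0 j
  have hM : M.det = N.det :=
    det_eq_of_forall_row_eq_smul_add_const (fun i => if i = 0 then 0 else -1) 0 (by simp)
      (fun i j => by split_ifs <;> simp [M, *, sub_eq_add_neg])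
  rw [← hN, ← hM, det_succ_of_forall_apply_succ_zero (by simp [M, N]), charpoly]
  congr 1
  · simp [M, N]
  · congr 1
    refine Matrix.ext fun i j => ?_
    simp [M, N, charmatrix_apply, diagonal_apply, (Fin.succ_ne_zero j).symm, sub_sub_eq_add_sub,
      sub_add_eq_add_sub]

end CommRing

variable {R : Type*} {m : ℕ}

def borderWithRowSum [AddCommGroup R] (ρ : R) (v : Fin m → R) (A : Matrix (Fin m) (Fin m) R) :
    Matrix (Fin (m + 1)) (Fin (m + 1)) R :=
  let rows : Fin (m + 1) → Fin m → R := Fin.cons v fun i => v + A i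
  of fun i => Fin.cons (ρ - ∑ k, rows i k) (rows i)

section AddCommGroup

variable [AddCommGroup R] (ρ : R) (v : Fin m → R) (A : Matrix (Fin m) (Fin m) R)

@[simp] theorem borderWithRowSum_zero_zero : borderWithRowSum ρ v A 0 0 = ρ - ∑ k, v k := rfl

@[simp] theorem borderWithRowSum_zero_succ (j : Fin m) : borderWithRowSum ρ v A 0 j.succ = v j :=
  rfl

@[simp] theorem borderWithRowSum_succ_zero (i : Fin m) :
    borderWithRowSum ρ v A i.succ 0 = ρ - ∑ k, (v k + A i k) := rfl

@[simp] theorem borderWithRowSum_succ_succ (i j : Fin m) :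
    borderWithRowSum ρ v A i.succ j.succ = v j + A i j := rfl

end AddCommGroup

theorem borderWithRowSum_mulVec_one [CommRing R] (ρ : R) (v : Fin m → R)
    (A : Matrix (Fin m) (Fin m) R) : borderWithRowSum ρ v A *ᵥ (fun _ => 1) = fun _ => ρ := by
  ext i
  induction i using Fin.cases <;> simp [mulVec, dotProduct, Fin.sum_univ_succ]

theorem charpoly_borderWithRowSum [CommRing R] (ρ : R) (v : Fin m → R)
    (A : Matrix (Fin m) (Fin m) R) :
    (borderWithRowSum ρ v A).charpoly = (X - C ρ) * A.charpoly := by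
  rw [charpoly_eq_X_sub_C_mul_of_mulVec_one _ (borderWithRowSum_mulVec_one ρ v A)]
  congr 2
  ext i j
  simp

theorem borderWithRowSum_nonneg [AddCommGroup R] [PartialOrder R] [IsOrderedAddMonoid R]
    {ρ : R} {v : Fin m → R} {A : Matrix (Fin m) (Fin m) R}
    (hρ : 0 ≤ ρ - ∑ k, v k) (hv : ∀ j, 0 ≤ v j) (hA : ∀ i j, 0 ≤ v j + A i j)
    (hrow : ∀ i, ∑ k, A i k ≤ ρ - ∑ k, v k) (i j : Fin (m + 1)) :
    0 ≤ borderWithRowSum ρ v A i j := by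
  induction i using Fin.cases <;> induction j using Fin.cases
  · simpa using hρ
  · simpa using hv _
  · simpa [Finset.sum_add_distrib, sub_add_eq_sub_sub] using hrow _
  · simpa using hA _ _

end Matrix

theorem Complex.im_eq_zero_of_apply_eq_self {ι : Type*} {σ : ι → ι} {μ : ι → ℂ}
    (hμ : ∀ i, μ (σ i) = starRingEnd ℂ (μ i)) {i : ι} (hi : σ i = i) : (μ i).im = 0 :=
  Complex.conj_eq_iff_im.mp (hi ▸ hμ i).symm

section ConjPairMatrix

variable {ι : Type*} [Fintype ι] [DecidableEq ι]

/-- Up to a permutation of `ι`, this is block diagonal with a block `(a)` for each fixed point of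
`σ` and the block `[[a, -b], [b, a]]` (the real form of `a + bi`) for each pair `{i, σ i}`, where
`μ i = a + bi`. -/
noncomputable def conjPairMatrix (σ : Equiv.Perm ι) (μ : ι → ℂ) : Matrix ι ι ℝ :=
  diagonal (fun i => (μ i).re) - diagonal (fun i => (μ i).im) * σ.permMatrix ℝ

variable {σ : Equiv.Perm ι} {μ : ι → ℂ}

theorem conjPairMatrix_apply (i j : ι) :
    conjPairMatrix σ μ i j =
      (if i = j then (μ i).re else 0) - if σ i = j then (μ i).im else 0 := by
  simp [conjPairMatrix, diagonal_apply, PEquiv.toMatrix_apply]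

theorem conjPairMatrix_apply_self (hμ : ∀ i, μ (σ i) = starRingEnd ℂ (μ i)) (i : ι) :
    conjPairMatrix σ μ i i = (μ i).re := by
  rw [conjPairMatrix_apply, if_pos rfl]
  split_ifs with h
  · simp [Complex.im_eq_zero_of_apply_eq_self hμ h]
  · simp

theorem re_le_conjPairMatrix_apply (hμ : ∀ i, μ (σ i) = starRingEnd ℂ (μ i))
    (hμF : ∀ i, |(μ i).im| ≤ -(μ i).re) (i j : ι) : (μ j).re ≤ conjPairMatrix σ μ i j := by
  rw [conjPairMatrix_apply]
  split_ifs with hij hσ hσ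
  · subst hij
    simp [Complex.im_eq_zero_of_apply_eq_self hμ hσ]
  · simp [hij]
  · have hre : (μ j).re = (μ i).re := by rw [← hσ, hμ, Complex.conj_re]
    linarith [le_abs_self (μ i).im, hμF i]
  · linarith [abs_nonneg (μ j).im, hμF j]

theorem sum_conjPairMatrix_apply (i : ι) :
    ∑ j, conjPairMatrix σ μ i j = (μ i).re - (μ i).im := by
  simp [conjPairMatrix_apply, Finset.sum_sub_distrib]

theorem charpoly_conjPairMatrix (hσ : Function.Involutive σ)
    (hμ : ∀ i, μ (σ i) = starRingEnd ℂ (μ i)) :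
    (conjPairMatrix σ μ).charpoly.map (algebraMap ℝ ℂ) = ∏ i, (X - C (μ i)) := by
  set P := σ.permMatrix ℂ
  have hPP : P * P = 1 := by
    rw [← permMatrix_mul, show σ * σ = 1 from Equiv.ext hσ, permMatrix_one]
  have hPd (d : ι → ℂ) : P * diagonal d = diagonal (d ∘ σ) * P := by
    ext i j
    by_cases h : σ i = j <;> simp [P, PEquiv.toMatrix_apply, h]
  have hmap : (conjPairMatrix σ μ).map (algebraMap ℝ ℂ)
      = diagonal (fun i => ((μ i).re : ℂ)) - diagonal (fun i => ((μ i).im : ℂ)) * P := by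
    ext i j
    rw [map_apply, conjPairMatrix_apply]
    simp only [P, Matrix.sub_apply, diagonal_mul, diagonal_apply, PEquiv.toMatrix_apply,
      Equiv.toPEquiv_apply, Option.mem_def, Option.some.injEq]
    split_ifs <;> simp
  -- The columns `e j + I • e (σ j)` of `Q` are eigenvectors, with eigenvalues `conj (μ j)`.
  set Q : Matrix ι ι ℂ := 1 + Complex.I • P
  have hQ : Q * ((2⁻¹ : ℂ) • (1 - Complex.I • P)) = 1 := by
    rw [Matrix.mul_smul, add_mul, Matrix.one_mul, mul_sub, Matrix.mul_one, smul_mul_smul_comm, hPP,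
      Complex.I_mul_I]
    module
  have hMQ : (conjPairMatrix σ μ).map (algebraMap ℝ ℂ) * Q
      = Q * diagonal (fun i => starRingEnd ℂ (μ i)) := by
    simp only [hmap, Q, mul_add, add_mul, sub_mul, Matrix.mul_one, Matrix.one_mul,
      Matrix.mul_smul, Matrix.smul_mul, Matrix.mul_assoc, hPP, hPd]
    ext i j
    simp only [Matrix.add_apply, Matrix.sub_apply, Matrix.smul_apply, diagonal_mul, diagonal_apply,
      Function.comp_apply, hμ, Complex.conj_conj, P, PEquiv.toMatrix_apply, Equiv.toPEquiv_apply,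
      Option.mem_def, Option.some.injEq]
    split_ifs with hij hσ hσ
    · subst hij
      have him := Complex.im_eq_zero_of_apply_eq_self hμ hσ
      apply Complex.ext <;> simp [him]
    all_goals apply Complex.ext <;> simp
  rw [← charpoly_map, charpoly_eq_of_mul_eq_mul (isUnit_det_of_right_inverse hQ) hMQ,
    charpoly_diagonal]
  simp_rw [← hμ]
  exact Equiv.prod_comp σ fun i => X - C (μ i)

end ConjPairMatrix

theorem borderWithRowSum_conjPairMatrix_nonneg {m : ℕ} {σ : Equiv.Perm (Fin m)} {μ : Fin m → ℂ}
    (hμ : ∀ i, μ (σ i) = starRingEnd ℂ (μ i)) (hμF : ∀ i, |(μ i).im| ≤ -(μ i).re) {ρ : ℝ}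
    {g : Fin m → ℝ} (hg : ∀ j, 0 ≤ g j) (hρ : 0 ≤ ρ - ∑ j, (g j - (μ j).re)) (i j : Fin (m + 1)) :
    0 ≤ borderWithRowSum ρ (fun j => g j - (μ j).re) (conjPairMatrix σ μ) i j := by
  refine borderWithRowSum_nonneg hρ (fun j => ?_) (fun i j => ?_) (fun i => ?_) i j
  · linarith [hg j, abs_nonneg (μ j).im, hμF j]
  · linarith [hg j, re_le_conjPairMatrix_apply hμ hμF i j]
  · rw [sum_conjPairMatrix_apply]
    linarith [neg_le_abs (μ i).im, hμF i]

/-- For a self-conjugate list `λ₁, …, λₙ` of Suleimanova type (`Re λᵢ ≤ 0` and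
`|Re λᵢ| ≥ |Im λᵢ|` for `i ≥ 2`) and nonnegative reals `γ₁, …, γₙ` with
`∑ γᵢ = ∑ λᵢ`, there is a nonnegative matrix `B` with constant row sums `λ₁`,
diagonal entries `γ₁, …, γₙ` and spectrum `{λ₁, …, λₙ}`. -/
theorem suleimanova_prescribed_diagonal {n : ℕ} (hn : 0 < n)
    (lam : Fin n → ℂ) (γ : Fin n → ℝ)
    (hreal : (lam ⟨0, hn⟩).im = 0)
    (hconj : (Finset.univ.val.map lam).map (starRingEnd ℂ) = Finset.univ.val.map lam)
    (hF : ∀ i : Fin n, i ≠ ⟨0, hn⟩ →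
      (lam i).re ≤ 0 ∧ |(lam i).im| ≤ |(lam i).re|)
    (hγ : ∀ i, 0 ≤ γ i)
    (hsum : (∑ i, (γ i : ℂ)) = ∑ i, lam i) :
    ∃ B : Matrix (Fin n) (Fin n) ℝ,
      (∀ i j, 0 ≤ B i j) ∧
      (B.mulVec (fun _ => 1) = fun _ => (lam ⟨0, hn⟩).re) ∧
      (∀ i, B i i = γ i) ∧
      B.charpoly.map (algebraMap ℝ ℂ) = ∏ i, (X - C (lam i)) := by
  obtain ⟨m, rfl⟩ : ∃ m, n = m + 1 := ⟨n - 1, by omega⟩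
  simp only [Fin.zero_eta] at hreal hF ⊢
  set μ : Fin m → ℂ := fun i => lam i.succ
  obtain ⟨σ, hσ, hσμ⟩ := Complex.exists_involutive_perm_conj μ
    (Multiset.map_univ_val_succ_eq_of_map_univ_val_eq (Complex.conj_eq_iff_im.mpr hreal) hconj)
  have hμF (i : Fin m) : |(μ i).im| ≤ -(μ i).re := by
    obtain ⟨hre, him⟩ := hF i.succ (Fin.succ_ne_zero i)
    rwa [abs_of_nonpos hre] at him
  have hγ0 : (lam 0).re - ∑ j, (γ j.succ - (μ j).re) = γ 0 := by
    have hsum_re := congrArg Complex.re hsum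
    simp only [Fin.sum_univ_succ, Complex.add_re, Complex.re_sum, Complex.ofReal_re] at hsum_re
    simp only [μ, Finset.sum_sub_distrib]
    linarith
  refine ⟨borderWithRowSum (lam 0).re (fun j => γ j.succ - (μ j).re) (conjPairMatrix σ μ),
    borderWithRowSum_conjPairMatrix_nonneg hσμ hμF (fun j => hγ j.succ) (hγ0 ▸ hγ 0),
    borderWithRowSum_mulVec_one _ _ _, fun i => ?_, ?_⟩
  · induction i using Fin.cases
    · exact hγ0
    · simp [conjPairMatrix_apply_self hσμ]
  · rw [charpoly_borderWithRowSum, Polynomial.map_mul, charpoly_conjPairMatrix hσ hσμ,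
      Fin.prod_univ_succ]
    have hlam0 : ((lam 0).re : ℂ) = lam 0 := Complex.ext rfl (by simp [hreal])
    simp [hlam0, μ]
end

section
/- Let λ₁, λ₂, …, λₙ be real numbers with λᵢ ≤ 0 for i = 2, …, n, and let γ₁, …, γₙ be nonnegative real numbers with γ₁ + ⋯ + γₙ = λ₁ + ⋯ + λₙ. Then there exists an n×n entrywise nonnegative real matrix B with constant row sums λ₁ (B·e = λ₁·e), with diagonal entries B_{ii} = γᵢ for i = 1, …, n, and with characteristic polynomial ∏ᵢ₌₁ⁿ (X − λᵢ). -/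
open Polynomial Matrix

namespace SuleimanovaAux
variable {n : ℕ}

def BB (i0 : Fin n) (lam γ : Fin n → ℝ) : Matrix (Fin n) (Fin n) ℝ :=
  fun i j => γ j - (if j = i0 then lam i else lam j) + (if i = j then lam j else 0)

def TT (i0 : Fin n) (lam γ : Fin n → ℝ) : Matrix (Fin n) (Fin n) ℝ :=
  fun i j => (if i = j then lam i else 0) + (if i = i0 ∧ ¬ j = i0 then γ j - lam j else 0)

def SS (i0 : Fin n) : Matrix (Fin n) (Fin n) ℝ :=
  fun i j => (if i = j then (1:ℝ) else 0) + (if j = i0 ∧ ¬ i = i0 then 1 else 0)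

theorem rowsum (i0 : Fin n) (lam γ : Fin n → ℝ)
    (hsum : ∑ i, γ i = ∑ i, lam i) (i : Fin n) :
    ∑ j, BB i0 lam γ i j = lam i0 := by
  have h1 : ∀ j : Fin n, (if j = i0 then lam i else lam j)
      = lam j + (if j = i0 then lam i - lam i0 else 0) := by
    intro j; split_ifs with h
    · subst h; ring
    · ring
  simp only [BB, h1]
  rw [Finset.sum_add_distrib, Finset.sum_sub_distrib, Finset.sum_add_distrib,
    Finset.sum_ite_eq' Finset.univ i0, Finset.sum_ite_eq Finset.univ i]
  simp [hsum]

theorem key (i0 : Fin n) (lam γ : Fin n → ℝ)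
    (hsum : ∑ i, γ i = ∑ i, lam i) :
    BB i0 lam γ * SS i0 = SS i0 * TT i0 lam γ := by
  ext i j
  rw [Matrix.mul_apply, Matrix.mul_apply]
  by_cases hj : j = i0
  · subst hj
    have hS : ∀ k : Fin n, SS j k j = 1 := by
      intro k; unfold SS; split_ifs <;> simp_all
    have hT : ∀ k : Fin n, TT j lam γ k j = if k = j then lam j else 0 := by
      intro k; unfold TT; split_ifs <;> simp_all
    simp only [hS, hT, mul_one, mul_ite, mul_zero, ite_mul, one_mul]
    rw [rowsum j lam γ hsum i, Finset.sum_ite_eq' Finset.univ j]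
    have hS2 : SS j i j = 1 := by unfold SS; split_ifs <;> simp_all
    simp [hS2]
  · have hS : ∀ k : Fin n, SS i0 k j = if k = j then 1 else 0 := by
      intro k; unfold SS; split_ifs <;> simp_all
    have hS3 : ∀ k : Fin n, SS i0 i k = (if i = k then 1 else 0) + (if k = i0 ∧ ¬ i = i0 then 1 else 0) := fun k => rfl
    simp only [hS, hS3, mul_ite, mul_one, mul_zero, add_mul, ite_mul, one_mul, zero_mul]
    rw [Finset.sum_ite_eq' Finset.univ j, Finset.sum_add_distrib,
      Finset.sum_ite_eq Finset.univ i]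
    by_cases hi : i = i0
    · have hij : ¬ i = j := fun h => hj (h ▸ hi)
      simp only [hi, not_true, and_false, if_false, Finset.sum_const_zero, add_zero,
        if_pos (Finset.mem_univ _)]
      have hij' : ¬ i0 = j := fun h => hj h.symm
      simp [BB, TT, hi, hj, hij, hij']
    · simp only [hi, not_false_iff, and_true, if_pos (Finset.mem_univ _)]
      rw [Finset.sum_ite_eq' Finset.univ i0]
      simp only [if_pos (Finset.mem_univ _)]
      unfold BB TT
      split_ifs <;> simp_all

theorem detSS (i0 : Fin n) (h0 : ∀ j, i0 ≤ j) : (SS i0).det = 1 := by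
  rw [Matrix.det_of_lowerTriangular (SS i0)
    (by
      intro i j hij
      have hij' : i < j := hij
      unfold SS
      have h1 : ¬ i = j := ne_of_lt hij'
      have h2 : ¬ j = i0 := fun h => absurd (h ▸ hij') (not_lt.2 (h ▸ h0 i))
      simp [h1, h2])]
  simp [SS]

theorem charpolyTT (i0 : Fin n) (h0 : ∀ j, i0 ≤ j) (lam γ : Fin n → ℝ) :
    (TT i0 lam γ).charpoly = ∏ i, (X - C (lam i)) := by
  rw [Matrix.charpoly, Matrix.det_of_upperTriangular
    (by
      intro i j hij
      have hij' : (j : Fin n) < i := hij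
      rw [charmatrix_apply_ne _ _ _ (ne_of_gt hij')]
      have h1 : ¬ i = j := ne_of_gt hij'
      have h2 : ¬ i = i0 := fun h => absurd (h ▸ hij') (not_lt.2 (h ▸ h0 j))
      simp [TT, h1, h2])]
  refine Finset.prod_congr rfl fun i _ => ?_
  rw [charmatrix_apply_eq]
  congr 1
  simp [TT]

theorem charpolyBB (i0 : Fin n) (h0 : ∀ j, i0 ≤ j) (lam γ : Fin n → ℝ)
    (hsum : ∑ i, γ i = ∑ i, lam i) :
    (BB i0 lam γ).charpoly = ∏ i, (X - C (lam i)) := by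
  have hmap : (BB i0 lam γ).map (C : ℝ →+* ℝ[X]) * (SS i0).map C
      = (SS i0).map C * (TT i0 lam γ).map C := by
    rw [← Matrix.map_mul, key i0 lam γ hsum, Matrix.map_mul]
  have hcm : charmatrix (BB i0 lam γ) * (SS i0).map C
      = (SS i0).map C * charmatrix (TT i0 lam γ) := by
    simp only [charmatrix, RingHom.mapMatrix_apply]
    rw [sub_mul, mul_sub, hmap]
    congr 1
    exact (Matrix.scalar_commute (X : ℝ[X]) (fun r' => Commute.all _ _) _).eq
  have hdet := congrArg Matrix.det hcm
  rw [Matrix.det_mul, Matrix.det_mul, ← RingHom.mapMatrix_apply, ← RingHom.map_det,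
    detSS i0 h0] at hdet
  simp only [_root_.map_one, mul_one, one_mul] at hdet
  rw [Matrix.charpoly, hdet, ← Matrix.charpoly, charpolyTT i0 h0 lam γ]

end SuleimanovaAux

/-- Real Suleimanova case with prescribed diagonal: if `λᵢ ≤ 0` for `i ≥ 2` and the
nonnegative reals `γ₁, …, γₙ` satisfy `∑ γᵢ = ∑ λᵢ`, then some nonnegative matrix
`B` with constant row sums `λ₁` has diagonal entries `γ₁, …, γₙ` and
characteristic polynomial `∏ (X − λᵢ)`. -/
theorem real_suleimanova_prescribed_diagonal {n : ℕ} (hn : 0 < n)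
    (lam γ : Fin n → ℝ)
    (hneg : ∀ i : Fin n, i ≠ ⟨0, hn⟩ → lam i ≤ 0)
    (hγ : ∀ i, 0 ≤ γ i)
    (hsum : ∑ i, γ i = ∑ i, lam i) :
    ∃ B : Matrix (Fin n) (Fin n) ℝ,
      (∀ i j, 0 ≤ B i j) ∧
      (B.mulVec (fun _ => 1) = fun _ => lam ⟨0, hn⟩) ∧
      (∀ i, B i i = γ i) ∧
      B.charpoly = ∏ i, (X - C (lam i)) := by
  classical
  set i0 : Fin n := ⟨0, hn⟩ with hi0
  have h0 : ∀ j : Fin n, i0 ≤ j := fun j => by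
    rw [Fin.le_def]; exact Nat.zero_le _
  refine ⟨SuleimanovaAux.BB i0 lam γ, ?_, ?_, ?_, ?_⟩
  · intro i j
    unfold SuleimanovaAux.BB
    by_cases hij : i = j
    · subst hij
      simp only [if_pos rfl]
      split_ifs with h <;> [skip; skip] <;> (have := hγ i; linarith)
    · simp only [if_neg hij, add_zero]
      by_cases hji : j = i0
      · have hii0 : i ≠ i0 := fun h => hij (h.trans hji.symm)
        have h1 := hneg i hii0
        have h2 := hγ j
        simp only [if_pos hji]
        linarith
      · have h1 := hneg j hji
        have h2 := hγ j
        simp only [if_neg hji]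
        linarith
  · funext i
    simp only [Matrix.mulVec, dotProduct, mul_one]
    exact SuleimanovaAux.rowsum i0 lam γ hsum i
  · intro i
    unfold SuleimanovaAux.BB
    split_ifs <;> simp_all
  · exact SuleimanovaAux.charpolyBB i0 h0 lam γ hsum
end

section
/- Let λ₁, λ₂, …, λₙ be complex numbers such that λ₁ is real, λ₁ + ⋯ + λₙ ≥ 0 (as a real number), the multiset {λ₁, …, λₙ} is closed under complex conjugation, and for i = 2, …, n one has Re λᵢ ≤ 0 and |Re λᵢ| ≥ |Im λᵢ|. Then the list is realizable: there exists an n×n entrywise nonnegative real matrix with constant row sums λ₁ whose characteristic polynomial, viewed over ℂ, equals ∏ᵢ₌₁ⁿ (X − λᵢ). -/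
/-!
Put `B = -∑_{i ≥ 2} Re λᵢ ≤ λ₁` and say that a real polynomial has ratio at most `B` if its
coefficients are nonnegative and `qₖ ≤ B qₖ₊₁` below the leading one. These bounds add under
multiplication, and the real factors `X - x` (`x ≤ 0`) and `(X - z)(X - z̄)` (`|Im z| ≤ -Re z`) of
`Q = ∏_{i ≥ 2} (X - λᵢ)` have ratio at most `-x`, resp. `-2 Re z`; so `Q` has ratio at most
`B ≤ λ₁`. Hence `f = Q (X - λ₁)` has nonpositive non-leading coefficients and the root `λ₁`, and
the companion matrix of `f`, conjugated by `diag(1, λ₁, …, λ₁ⁿ⁻¹)`, is nonnegative with row sums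
`λ₁`. If `λ₁ = 0` then `B = 0`, so `Q = Xⁿ⁻¹` and the zero matrix works.
-/

open Polynomial Matrix ComplexConjugate

section CoeffRatio

variable {R : Type*} [CommSemiring R] [PartialOrder R]

def CoeffRatioLE (B : R) (P : R[X]) : Prop :=
  (∀ k, 0 ≤ P.coeff k) ∧ ∀ k < P.natDegree, P.coeff k ≤ B * P.coeff (k + 1)

theorem coeffRatioLE_one [IsOrderedRing R] (B : R) : CoeffRatioLE B 1 :=
  ⟨fun k => by rw [coeff_one]; split_ifs <;> simp, by simp⟩

theorem CoeffRatioLE.mono [IsOrderedRing R] {B B' : R} {P : R[X]} (h : CoeffRatioLE B P)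
    (hB : B ≤ B') : CoeffRatioLE B' P :=
  ⟨h.1, fun k hk => (h.2 k hk).trans (mul_le_mul_of_nonneg_right hB (h.1 _))⟩

open Finset in
theorem CoeffRatioLE.mul [IsOrderedRing R] {B₁ B₂ : R} {P Q : R[X]} (hB₁ : 0 ≤ B₁)
    (hB₂ : 0 ≤ B₂) (hP : CoeffRatioLE B₁ P) (hQ : CoeffRatioLE B₂ Q) :
    CoeffRatioLE (B₁ + B₂) (P * Q) := by
  refine ⟨fun k => by rw [coeff_mul]; exact sum_nonneg fun x _ => mul_nonneg (hP.1 _) (hQ.1 _),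
    fun k hk => ?_⟩
  replace hk := hk.trans_le natDegree_mul_le
  -- A term `pᵢ qⱼ` of the `k`-th coefficient is bounded via `P` if `i < deg P`, else via `Q`.
  have hterm : ∀ x ∈ antidiagonal k, P.coeff x.1 * Q.coeff x.2 ≤
      B₁ * (P.coeff (x.1 + 1) * Q.coeff x.2) + B₂ * (P.coeff x.1 * Q.coeff (x.2 + 1)) := by
    intro x hx
    rw [HasAntidiagonal.mem_antidiagonal] at hx
    have h₁ := mul_nonneg hB₁ (mul_nonneg (hP.1 (x.1 + 1)) (hQ.1 x.2))
    have h₂ := mul_nonneg hB₂ (mul_nonneg (hP.1 x.1) (hQ.1 (x.2 + 1)))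
    rcases lt_or_ge x.1 P.natDegree with hi | hi
    · calc P.coeff x.1 * Q.coeff x.2 ≤ B₁ * P.coeff (x.1 + 1) * Q.coeff x.2 :=
            mul_le_mul_of_nonneg_right (hP.2 _ hi) (hQ.1 _)
        _ ≤ _ := by rw [mul_assoc]; exact le_add_of_nonneg_right h₂
    · calc P.coeff x.1 * Q.coeff x.2 ≤ P.coeff x.1 * (B₂ * Q.coeff (x.2 + 1)) :=
            mul_le_mul_of_nonneg_left (hQ.2 _ (by omega)) (hP.1 _)
        _ ≤ _ := by rw [mul_left_comm]; exact le_add_of_nonneg_left h₁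
  have hshift₁ : ∑ x ∈ antidiagonal k, P.coeff (x.1 + 1) * Q.coeff x.2 ≤
      (P * Q).coeff (k + 1) := by
    rw [coeff_mul, Nat.sum_antidiagonal_succ]
    exact le_add_of_nonneg_left (mul_nonneg (hP.1 _) (hQ.1 _))
  have hshift₂ : ∑ x ∈ antidiagonal k, P.coeff x.1 * Q.coeff (x.2 + 1) ≤
      (P * Q).coeff (k + 1) := by
    rw [coeff_mul, Nat.sum_antidiagonal_succ']
    exact le_add_of_nonneg_left (mul_nonneg (hP.1 _) (hQ.1 _))
  calc (P * Q).coeff k ≤ ∑ x ∈ antidiagonal k,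
        (B₁ * (P.coeff (x.1 + 1) * Q.coeff x.2) + B₂ * (P.coeff x.1 * Q.coeff (x.2 + 1))) := by
        rw [coeff_mul]; exact sum_le_sum hterm
    _ ≤ B₁ * (P * Q).coeff (k + 1) + B₂ * (P * Q).coeff (k + 1) := by
        rw [sum_add_distrib, ← mul_sum, ← mul_sum]
        exact add_le_add (mul_le_mul_of_nonneg_left hshift₁ hB₁)
          (mul_le_mul_of_nonneg_left hshift₂ hB₂)
    _ = (B₁ + B₂) * (P * Q).coeff (k + 1) := (add_mul _ _ _).symm

theorem CoeffRatioLE.eq_X_pow_of_zero {P : R[X]} (hP : P.Monic) (h : CoeffRatioLE 0 P) :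
    P = X ^ P.natDegree := by
  ext k
  rw [coeff_X_pow]
  rcases lt_trichotomy k P.natDegree with hk | rfl | hk
  · rw [if_neg hk.ne]
    exact le_antisymm (by simpa using h.2 k hk) (h.1 k)
  · rw [if_pos rfl, hP.coeff_natDegree]
  · rw [if_neg hk.ne', coeff_eq_zero_of_natDegree_lt hk]

end CoeffRatio

section CoeffRatioRing

variable {R : Type*} [CommRing R] [PartialOrder R] [IsOrderedRing R]

theorem coeffRatioLE_X_sub_C {x : R} (hx : x ≤ 0) : CoeffRatioLE (-x) (X - C x) := by
  refine ⟨fun k => ?_, fun k hk => ?_⟩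
  · rw [coeff_sub, coeff_X, coeff_C]
    split_ifs <;> simp_all
  · obtain rfl : k = 0 := by have := natDegree_X_sub_C_le (R := R) (r := x); omega
    simp

theorem coeffRatioLE_quadratic {b c : R} (hb : 0 ≤ b) (hc : 0 ≤ c) (hcb : c ≤ b * b) :
    CoeffRatioLE b (X ^ 2 + C b * X + C c) := by
  refine ⟨fun k => ?_, fun k hk => ?_⟩
  · rw [coeff_add, coeff_add, coeff_C_mul_X, coeff_X_pow, coeff_C]
    split_ifs <;> simp_all
  · have : (X ^ 2 + C b * X + C c).natDegree ≤ 2 := by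
      simpa using natDegree_quadratic_le (a := (1 : R)) (b := b) (c := c)
    obtain rfl | rfl : k = 0 ∨ k = 1 := by omega
    all_goals simp [coeff_X, hcb]

theorem CoeffRatioLE.coeff_mul_X_sub_C_nonpos {L : R} {Q : R[X]} (hL : 0 ≤ L)
    (h : CoeffRatioLE L Q) {k : ℕ} (hk : k < Q.natDegree + 1) : (Q * (X - C L)).coeff k ≤ 0 := by
  rcases k with _ | k
  · simpa [mul_coeff_zero] using mul_nonneg (h.1 0) hL
  · rw [coeff_mul_X_sub_C, sub_nonpos, mul_comm]
    exact h.2 k (by omega)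

end CoeffRatioRing

@[elab_as_elim]
theorem Multiset.induction_of_map_conj_eq_self {p : Multiset ℂ → Prop} (s : Multiset ℂ)
    (hs : s.map conj = s) (zero : p 0) (real : ∀ (x : ℝ) s, p s → p ((x : ℂ) ::ₘ s))
    (pair : ∀ z s, p s → p (z ::ₘ conj z ::ₘ s)) : p s := by
  induction s using Multiset.strongInductionOn with
  | _ s ih =>
  obtain rfl | ⟨z, hz⟩ := s.empty_or_exists_mem
  · exact zero
  obtain ⟨t, rfl⟩ := Multiset.exists_cons_of_mem hz
  by_cases him : z.im = 0
  · rw [Multiset.map_cons, Complex.conj_eq_iff_im.mpr him, Multiset.cons_inj_right] at hs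
    rw [← Complex.re_add_im z, him, Complex.ofReal_zero, zero_mul, add_zero]
    exact real _ _ (ih _ (Multiset.lt_cons_self _ _) hs)
  · have hmem : conj z ∈ t := by
      have := Multiset.mem_map_of_mem conj (Multiset.mem_cons_self z t)
      rwa [hs, Multiset.mem_cons, or_iff_right (mt Complex.conj_eq_iff_im.mp him)] at this
    obtain ⟨u, rfl⟩ := Multiset.exists_cons_of_mem hmem
    rw [Multiset.map_cons, Multiset.map_cons, Complex.conj_conj, Multiset.cons_swap,
      Multiset.cons_inj_right, Multiset.cons_inj_right] at hs
    exact pair _ _ (ih _ ((Multiset.lt_cons_self _ _).trans (Multiset.lt_cons_self _ _)) hs)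

theorem sum_map_neg_re_nonneg {s : Multiset ℂ} (hs : ∀ z ∈ s, |z.im| ≤ -z.re) :
    0 ≤ (s.map fun z => -z.re).sum :=
  Multiset.sum_nonneg fun _ hx => by
    obtain ⟨z, hz, rfl⟩ := Multiset.mem_map.mp hx
    exact (abs_nonneg _).trans (hs z hz)

theorem exists_coeffRatioLE_map_eq_X_sub_C_mul_X_sub_C_conj {z : ℂ} (hz : |z.im| ≤ -z.re) :
    ∃ q : ℝ[X], q.map (algebraMap ℝ ℂ) = (X - C z) * (X - C (conj z)) ∧
      CoeffRatioLE (-2 * z.re) q := by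
  have hb : ((-2 * z.re : ℝ) : ℂ) = -(z + conj z) := by rw [Complex.add_conj]; push_cast; ring
  refine ⟨X ^ 2 + C (-2 * z.re) * X + C (Complex.normSq z), ?_,
    coeffRatioLE_quadratic (by linarith [abs_nonneg z.im]) (Complex.normSq_nonneg z) ?_⟩
  · rw [Polynomial.map_add, Polynomial.map_add, Polynomial.map_mul, Polynomial.map_pow, map_X,
      map_C, map_C, Complex.coe_algebraMap, hb, ← Complex.mul_conj, C_neg, C_add, C_mul]
    ring
  · rw [Complex.normSq_apply]
    nlinarith [sq_abs z.im, abs_nonneg z.im]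

theorem exists_coeffRatioLE_of_map_conj_eq_self (s : Multiset ℂ) (hs : s.map conj = s)
    (hsec : ∀ z ∈ s, |z.im| ≤ -z.re) :
    ∃ Q : ℝ[X], Q.map (algebraMap ℝ ℂ) = (s.map fun z => X - C z).prod ∧
      CoeffRatioLE (s.map fun z => -z.re).sum Q := by
  revert hsec
  refine Multiset.induction_of_map_conj_eq_self s hs ?_ ?_ ?_
  · intro
    exact ⟨1, by simp, by simpa using coeffRatioLE_one (0 : ℝ)⟩
  · intro x t ih hsec
    have ht : ∀ w ∈ t, |w.im| ≤ -w.re := fun w hw => hsec w (Multiset.mem_cons_of_mem hw)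
    obtain ⟨Q, hQ, hQB⟩ := ih ht
    have hx : x ≤ 0 := by simpa using hsec x (Multiset.mem_cons_self _ _)
    refine ⟨(X - C x) * Q, by simp [hQ], ?_⟩
    simpa using (coeffRatioLE_X_sub_C hx).mul (neg_nonneg.mpr hx) (sum_map_neg_re_nonneg ht) hQB
  · intro z t ih hsec
    have ht : ∀ w ∈ t, |w.im| ≤ -w.re :=
      fun w hw => hsec w (Multiset.mem_cons_of_mem (Multiset.mem_cons_of_mem hw))
    obtain ⟨Q, hQ, hQB⟩ := ih ht
    have hz := hsec z (Multiset.mem_cons_self _ _)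
    obtain ⟨q, hq, hqB⟩ := exists_coeffRatioLE_map_eq_X_sub_C_mul_X_sub_C_conj hz
    refine ⟨q * Q, by simp only [Polynomial.map_mul, hq, hQ, Multiset.map_cons,
      Multiset.prod_cons, mul_assoc], ?_⟩
    convert hqB.mul (by linarith [abs_nonneg z.im]) (sum_map_neg_re_nonneg ht) hQB using 1
    simp only [Multiset.map_cons, Multiset.sum_cons, Complex.conj_re]
    ring

section Companion

variable {K : Type*} [Field K]

/-- The companion matrix of `f` conjugated by `diag(1, L, …, Lⁿ⁻¹)`. -/
def rowSumCompanion (n : ℕ) (L : K) (f : K[X]) : Matrix (Fin n) (Fin n) K :=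
  of fun i j => if (i : ℕ) + 1 = j then L
    else if (i : ℕ) + 1 = n then -f.coeff j * L ^ (j : ℕ) / L ^ (n - 1) else 0

theorem charmatrix_rowSumCompanion_mulVec {m : ℕ} {L : K} {f : K[X]} (hL : L ≠ 0)
    (hf : f.Monic) (hdeg : f.natDegree = m + 1) :
    charmatrix (rowSumCompanion (m + 1) L f) *ᵥ (fun i => C (L⁻¹ ^ (i : ℕ)) * X ^ (i : ℕ)) =
      Pi.single (Fin.last m) (C (L⁻¹ ^ m) * f) := by
  funext i
  simp only [mulVec, dotProduct, charmatrix_apply, sub_mul, Finset.sum_sub_distrib,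
    diagonal_apply, ite_mul, zero_mul, Finset.sum_ite_eq, Finset.mem_univ, if_true]
  by_cases hi : i = Fin.last m
  · subst hi
    have hrow (j : Fin (m + 1)) :
        C (rowSumCompanion (m + 1) L f (Fin.last m) j) * (C (L⁻¹ ^ (j : ℕ)) * X ^ (j : ℕ)) =
          -C (L⁻¹ ^ m) * (C (f.coeff j) * X ^ (j : ℕ)) := by
      have hscalar :
          -f.coeff j * L ^ (j : ℕ) / L ^ m * L⁻¹ ^ (j : ℕ) = -L⁻¹ ^ m * f.coeff j := by
        have hcancel : L ^ (j : ℕ) * L⁻¹ ^ (j : ℕ) = 1 := by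
          rw [← mul_pow, mul_inv_cancel₀ hL, one_pow]
        rw [div_eq_mul_inv, ← inv_pow]
        linear_combination (-f.coeff j * L⁻¹ ^ m) * hcancel
      rw [rowSumCompanion, of_apply, if_neg (by simp; omega), if_pos (by simp),
        Nat.add_sub_cancel, ← mul_assoc, ← C_mul, hscalar, C_mul, C_neg, mul_assoc]
    rw [Finset.sum_congr rfl fun j _ => hrow j, ← Finset.mul_sum,
      Fin.sum_univ_eq_sum_range (fun j => C (f.coeff j) * X ^ j), Pi.single_eq_same]
    conv_rhs => rw [hf.as_sum, hdeg]
    simp only [Fin.val_last]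
    ring
  · have hi' : (i : ℕ) + 1 < m + 1 := by
      have := Fin.val_lt_last hi
      omega
    have hrow (j : Fin (m + 1)) :
        rowSumCompanion (m + 1) L f i j = if (⟨i + 1, hi'⟩ : Fin (m + 1)) = j then L else 0 := by
      simp only [rowSumCompanion, of_apply, Fin.ext_iff]
      rw [if_neg (c := (i : ℕ) + 1 = m + 1) (by omega)]
    simp only [hrow, apply_ite C, map_zero, ite_mul, zero_mul, Finset.sum_ite_eq,
      Finset.mem_univ, if_true, Pi.single_eq_of_ne hi, pow_succ, C_mul]
    have hcancel : C L * C L⁻¹ = (1 : K[X]) := by rw [← C_mul, mul_inv_cancel₀ hL, C_1]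
    linear_combination (-(C (L⁻¹ ^ (i : ℕ)) * X ^ (i : ℕ) * X)) * hcancel

/-- By `adjugate_mul`, `charmatrix_rowSumCompanion_mulVec` makes `f` divide the characteristic
polynomial; both are monic of degree `n`. -/
theorem charpoly_rowSumCompanion {n : ℕ} {L : K} {f : K[X]} (hL : L ≠ 0) (hf : f.Monic)
    (hdeg : f.natDegree = n) : (rowSumCompanion n L f).charpoly = f := by
  rcases n with _ | m
  · rw [eq_one_of_monic_natDegree_zero hf hdeg, charpoly, det_isEmpty]
  have h := congrFun (congrArg (· *ᵥ fun i : Fin (m + 1) => C (L⁻¹ ^ (i : ℕ)) * X ^ (i : ℕ))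
    (adjugate_mul (charmatrix (rowSumCompanion (m + 1) L f)))) 0
  simp only [← mulVec_mulVec, charmatrix_rowSumCompanion_mulVec hL hf hdeg, mulVec_single,
    smul_mulVec, one_mulVec, Pi.smul_apply, op_smul_eq_mul, col_apply, smul_eq_mul,
    Fin.val_zero, pow_zero, C_1, mul_one] at h
  have hdvd : f ∣ (rowSumCompanion (m + 1) L f).charpoly :=
    Dvd.intro_left _ (by rw [charpoly, ← h, mul_assoc])
  exact eq_of_monic_of_dvd_of_natDegree_le hf (charpoly_monic _) hdvd
    (by rw [charpoly_natDegree_eq_dim, Fintype.card_fin, hdeg])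

theorem rowSumCompanion_mulVec_one {n : ℕ} {L : K} {f : K[X]} (hL : L ≠ 0) (hf : f.Monic)
    (hdeg : f.natDegree = n) (hroot : f.IsRoot L) :
    rowSumCompanion n L f *ᵥ (fun _ => 1) = fun _ => L := by
  funext i
  simp only [mulVec, dotProduct, mul_one]
  by_cases hi : (i : ℕ) + 1 = n
  · have hsum : ∑ j ∈ Finset.range n, f.coeff j * L ^ j = -L ^ n := by
      have := hroot.eq_zero
      rw [eval_eq_sum_range, hdeg, Finset.sum_range_succ, ← hdeg, hf.coeff_natDegree,
        hdeg] at this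
      linear_combination this
    have hrow (j : Fin n) :
        rowSumCompanion n L f i j = -(f.coeff j * L ^ (j : ℕ)) / L ^ (n - 1) := by
      rw [rowSumCompanion, of_apply, if_neg (by omega), if_pos hi, neg_mul]
    rw [Finset.sum_congr rfl fun j _ => hrow j, ← Finset.sum_div, Finset.sum_neg_distrib,
      Fin.sum_univ_eq_sum_range (fun j => f.coeff j * L ^ j), hsum, neg_neg, ← hi,
      Nat.add_sub_cancel, pow_succ, mul_div_cancel_left₀ _ (pow_ne_zero _ hL)]
  · have hrow (j : Fin n) :
        rowSumCompanion n L f i j = if (⟨i + 1, by omega⟩ : Fin n) = j then L else 0 := by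
      simp only [rowSumCompanion, of_apply, hi, if_false, Fin.ext_iff]
    simp [hrow]

theorem rowSumCompanion_nonneg [LinearOrder K] [IsStrictOrderedRing K] {n : ℕ} {L : K}
    {f : K[X]} (hL : 0 ≤ L) (hf : ∀ k < n, f.coeff k ≤ 0) (i j : Fin n) :
    0 ≤ rowSumCompanion n L f i j := by
  simp only [rowSumCompanion, of_apply]
  split_ifs
  · exact hL
  · exact div_nonneg (mul_nonneg (neg_nonneg.mpr (hf j j.isLt)) (pow_nonneg hL _))
      (pow_nonneg hL _)
  · exact le_rfl

theorem exists_nonneg_mulVec_one_charpoly_eq_mul_X_sub_C [LinearOrder K] [IsStrictOrderedRing K]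
    {n : ℕ} {L : K} {Q : K[X]} (hL : 0 ≤ L) (hQ : Q.Monic) (hdeg : Q.natDegree + 1 = n)
    (h : CoeffRatioLE L Q) :
    ∃ A : Matrix (Fin n) (Fin n) K, (∀ i j, 0 ≤ A i j) ∧ A *ᵥ (fun _ => 1) = (fun _ => L) ∧
      A.charpoly = Q * (X - C L) := by
  rcases hL.eq_or_lt with rfl | hLpos
  · refine ⟨0, fun _ _ => le_rfl, zero_mulVec _, ?_⟩
    rw [charpoly_zero, Fintype.card_fin, h.eq_X_pow_of_zero hQ, C_0, sub_zero, ← pow_succ, hdeg]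
  have hf : (Q * (X - C L)).Monic := hQ.mul (monic_X_sub_C L)
  have hfdeg : (Q * (X - C L)).natDegree = n := by
    rw [hQ.natDegree_mul (monic_X_sub_C L), natDegree_X_sub_C, hdeg]
  exact ⟨rowSumCompanion n L (Q * (X - C L)),
    rowSumCompanion_nonneg hL fun k hk => h.coeff_mul_X_sub_C_nonpos hL (hdeg ▸ hk),
    rowSumCompanion_mulVec_one hLpos.ne' hf hfdeg (by simp),
    charpoly_rowSumCompanion hLpos.ne' hf hfdeg⟩

theorem monic_and_natDegree_eq_card_of_map_eq_prod {L : Type*} [CommRing L] [Nontrivial L]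
    {φ : K →+* L} {Q : K[X]} {s : Multiset L} (hQ : Q.map φ = (s.map fun z => X - C z).prod) :
    Q.Monic ∧ Q.natDegree = Multiset.card s :=
  ⟨monic_of_injective φ.injective
      (hQ ▸ monic_multiset_prod_of_monic _ _ fun z _ => monic_X_sub_C z),
    by rw [← natDegree_map φ, hQ, natDegree_multiset_prod_X_sub_C_eq_card]⟩

end Companion

theorem exists_nonneg_mulVec_one_charpoly_map_eq_prod (L : ℝ) (s : Multiset ℂ)
    (hs : s.map conj = s) (hsec : ∀ z ∈ s, |z.im| ≤ -z.re) (hB : (s.map fun z => -z.re).sum ≤ L)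
    {n : ℕ} (hn : Multiset.card s + 1 = n) :
    ∃ A : Matrix (Fin n) (Fin n) ℝ, (∀ i j, 0 ≤ A i j) ∧ A *ᵥ (fun _ => 1) = (fun _ => L) ∧
      A.charpoly.map (algebraMap ℝ ℂ) = (X - C (L : ℂ)) * (s.map fun z => X - C z).prod := by
  obtain ⟨Q, hQ, hQB⟩ := exists_coeffRatioLE_of_map_conj_eq_self s hs hsec
  obtain ⟨hQmonic, hQdeg⟩ := monic_and_natDegree_eq_card_of_map_eq_prod hQ
  obtain ⟨A, hA, hrow, hchar⟩ := exists_nonneg_mulVec_one_charpoly_eq_mul_X_sub_C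
    ((sum_map_neg_re_nonneg hsec).trans hB) hQmonic (hQdeg ▸ hn) (hQB.mono hB)
  refine ⟨A, hA, hrow, ?_⟩
  rw [hchar, Polynomial.map_mul, hQ, mul_comm]
  simp

/-- Realizability of Suleimanova-type lists: if `λ₁` is real, `∑ λᵢ ≥ 0`, the list is
closed under conjugation, and `Re λᵢ ≤ 0`, `|Re λᵢ| ≥ |Im λᵢ|` for `i ≥ 2`, then there
is an entrywise nonnegative matrix with constant row sums `λ₁` and spectrum
`{λ₁, …, λₙ}`. -/
theorem suleimanova_realizable {n : ℕ} (hn : 0 < n) (lam : Fin n → ℂ)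
    (hreal : (lam ⟨0, hn⟩).im = 0)
    (hsum : 0 ≤ (∑ i, lam i).re)
    (hconj : (Finset.univ.val.map lam).map (starRingEnd ℂ) = Finset.univ.val.map lam)
    (hF : ∀ i : Fin n, i ≠ ⟨0, hn⟩ →
      (lam i).re ≤ 0 ∧ |(lam i).im| ≤ |(lam i).re|) :
    ∃ A : Matrix (Fin n) (Fin n) ℝ,
      (∀ i j, 0 ≤ A i j) ∧
      (A.mulVec (fun _ => 1) = fun _ => (lam ⟨0, hn⟩).re) ∧
      A.charpoly.map (algebraMap ℝ ℂ) = ∏ i, (X - C (lam i)) := by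
  classical
  set i₀ : Fin n := ⟨0, hn⟩
  set s := (Finset.univ.erase i₀).val.map lam
  have hsplit : Finset.univ.val.map lam = lam i₀ ::ₘ s := by
    rw [← Multiset.map_cons, Finset.erase_val, Multiset.cons_erase (Finset.mem_univ_val i₀)]
  have hconj₀ : conj (lam i₀) = lam i₀ := Complex.conj_eq_iff_im.mpr hreal
  have hs : s.map conj = s := by
    rwa [hsplit, Multiset.map_cons, hconj₀, Multiset.cons_inj_right] at hconj
  have hsec : ∀ z ∈ s, |z.im| ≤ -z.re := by
    intro z hz
    obtain ⟨i, hi, rfl⟩ := Multiset.mem_map.mp hz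
    obtain ⟨hre, him⟩ := hF i (Finset.ne_of_mem_erase (Finset.mem_val.mp hi))
    rwa [abs_of_nonpos hre] at him
  have hB : (s.map fun z => -z.re).sum ≤ (lam i₀).re := by
    rw [← Finset.add_sum_erase _ _ (Finset.mem_univ i₀), Complex.add_re, Complex.re_sum] at hsum
    rw [Multiset.map_map, Finset.sum_map_val]
    simp only [Function.comp_apply, Finset.sum_neg_distrib]
    linarith
  obtain ⟨A, hA, hrow, hchar⟩ := exists_nonneg_mulVec_one_charpoly_map_eq_prod _ s hs hsec hB
    (n := n) (by simp [s]; omega)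
  refine ⟨A, hA, hrow, ?_⟩
  have hprod : ∏ i, (X - C (lam i)) = ((Finset.univ.val.map lam).map fun z => X - C z).prod := by
    rw [Multiset.map_map]; rfl
  rw [hchar, hprod, hsplit, Multiset.map_cons, Multiset.prod_cons,
    Complex.conj_eq_iff_re.mp hconj₀]
end

section
/- Let A be an n×n complex matrix written in block form A = [[A₁, a],[bᵀ, c]], where A₁ is (n−1)×(n−1), a and b are column vectors in ℂⁿ⁻¹, and c ∈ ℂ is the (n,n) entry. Let B be an m×m complex matrix and suppose s, t ∈ ℂᵐ satisfy B·s = c·s, tᵀB = c·tᵀ, and tᵀs = 1. Then the (n−1+m)×(n−1+m) matrix C = [[A₁, a·tᵀ],[s·bᵀ, B]] satisfies the characteristic polynomial identity χ_C(X)·(X − c) = χ_A(X)·χ_B(X); in particular the spectrum of C is the spectrum of A together with the spectrum of B with one copy of c removed. -/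
/-!
Away from `c` and the roots of `χ_B`, the block `x - B` is invertible and, `s` being an
eigenvector of `B` for `c`, `(x - B)⁻¹ s = (x - c)⁻¹ s`. The Schur complement of that block,
together with `tᵀ s = 1`, gives `χ_C(x) = χ_B(x) · det (x - A₁ - (x - c)⁻¹ a bᵀ)`, whose
second factor does not involve `(B, s, t)`. The matrix `A` is the gluing with the `1 × 1` data
`([c], 1, 1)`, so comparing the two gluings proves the identity at infinitely many points.
-/

open Polynomial Matrix

namespace Matrix

variable {K : Type*} [Field K] {n m : Type*} [Fintype n] [DecidableEq n] [Fintype m]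
  [DecidableEq m]

lemma scalar_sub_fromBlocks (x : K) (A : Matrix n n K) (B : Matrix n m K) (C : Matrix m n K)
    (D : Matrix m m K) :
    scalar (n ⊕ m) x - fromBlocks A B C D =
      fromBlocks (scalar n x - A) (-B) (-C) (scalar m x - D) := by
  ext (i | i) (j | j) <;> simp [diagonal_apply]

lemma inv_scalar_sub_mulVec_of_mulVec_eq_smul {B : Matrix m m K} {s : m → K} {c x : K}
    [Invertible (scalar m x - B)] (hs : B *ᵥ s = c • s) (hx : x ≠ c) :
    (scalar m x - B)⁻¹ *ᵥ s = (x - c)⁻¹ • s := by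
  refine inv_mulVec_eq_vec ?_
  rw [mulVec_smul, sub_mulVec, hs, scalar_apply, ← smul_one_eq_diagonal, smul_mulVec, one_mulVec,
    ← sub_smul, smul_smul, inv_mul_cancel₀ (sub_ne_zero.mpr hx), one_smul]

theorem eval_charpoly_fromBlocks_vecMulVec (A : Matrix n n K) (a b : n → K) {B : Matrix m m K}
    {s t : m → K} {c x : K} (hs : B *ᵥ s = c • s) (hts : t ⬝ᵥ s = 1) (hx : x ≠ c)
    (hB : B.charpoly.eval x ≠ 0) :
    (fromBlocks A (vecMulVec a t) (vecMulVec s b) B).charpoly.eval x =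
      B.charpoly.eval x * (scalar n x - A - (x - c)⁻¹ • vecMulVec a b).det := by
  rw [eval_charpoly] at hB
  have := invertibleOfIsUnitDet _ (Ne.isUnit hB)
  have hschur : vecMulVec a t * (scalar m x - B)⁻¹ * vecMulVec s b =
      (x - c)⁻¹ • vecMulVec a b := by
    rw [Matrix.mul_assoc, mul_vecMulVec, inv_scalar_sub_mulVec_of_mulVec_eq_smul hs hx,
      vecMulVec_mul_vecMulVec, dotProduct_smul, hts, smul_eq_mul, mul_one, vecMulVec_smul]
  rw [eval_charpoly, eval_charpoly, scalar_sub_fromBlocks, det_fromBlocks₂₂,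
    invOf_eq_nonsing_inv, Matrix.neg_mul, Matrix.neg_mul, Matrix.mul_neg, neg_neg, hschur]

theorem charpoly_fromBlocks_vecMulVec_mul_charpoly [Infinite K] {m' : Type*} [Fintype m']
    [DecidableEq m'] (A : Matrix n n K) (a b : n → K) {c : K}
    {B : Matrix m m K} {s t : m → K} (hs : B *ᵥ s = c • s) (hts : t ⬝ᵥ s = 1)
    {B' : Matrix m' m' K} {s' t' : m' → K} (hs' : B' *ᵥ s' = c • s')
    (hts' : t' ⬝ᵥ s' = 1) :
    (fromBlocks A (vecMulVec a t) (vecMulVec s b) B).charpoly * B'.charpoly =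
      (fromBlocks A (vecMulVec a t') (vecMulVec s' b) B').charpoly * B.charpoly := by
  apply eq_of_infinite_eval_eq
  have hfinite : Set.Finite ({c} ∪ {x | (B.charpoly * B'.charpoly).IsRoot x}) :=
    (Set.finite_singleton c).union
      (finite_setOfPred_isRoot (B.charpoly_monic.mul B'.charpoly_monic).ne_zero)
  refine hfinite.infinite_compl.mono fun x hx => ?_
  obtain ⟨hxc, hroot⟩ : x ≠ c ∧ B.charpoly.eval x * B'.charpoly.eval x ≠ 0 := by
    simpa [not_or] using hx
  obtain ⟨hB, hB'⟩ := mul_ne_zero_iff.mp hroot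
  rw [Set.mem_ofPred_eq, eval_mul, eval_mul,
    eval_charpoly_fromBlocks_vecMulVec A a b hs hts hxc hB,
    eval_charpoly_fromBlocks_vecMulVec A a b hs' hts' hxc hB']
  ring

end Matrix

theorem smigoc_glue_general {p m : ℕ} (A1 : Matrix (Fin p) (Fin p) ℂ)
    (a b : Fin p → ℂ) (c : ℂ)
    (B : Matrix (Fin m) (Fin m) ℂ) (s t : Fin m → ℂ)
    (hs : B.mulVec s = c • s) (hts : t ⬝ᵥ s = 1) :
    (Matrix.fromBlocks A1 (vecMulVec a t) (vecMulVec s b) B).charpoly *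
        (X - C c) =
      (Matrix.fromBlocks A1 (fun i _ => a i) (fun _ j => b j) (fun _ _ => c) :
          Matrix (Fin p ⊕ Unit) (Fin p ⊕ Unit) ℂ).charpoly * B.charpoly := by
  have hc : (of fun _ _ => c : Matrix Unit Unit ℂ) *ᵥ 1 = c • 1 := by
    ext; simp [mulVec, dotProduct]
  have hcharpoly : (of fun _ _ => c : Matrix Unit Unit ℂ).charpoly = X - C c := by
    simp [charpoly, det_unique]
  rw [← hcharpoly,
    charpoly_fromBlocks_vecMulVec_mul_charpoly A1 a b hs hts hc (t' := 1) (by simp)]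
  congr 3 <;> ext <;> simp

/-- Šmigoc's gluing lemma (eigenvalue content): if `A = [[A₁, a],[bᵀ, c]]`, and
`B s = c s`, `tᵀ B = c tᵀ`, `tᵀ s = 1`, then `C = [[A₁, a tᵀ],[s bᵀ, B]]` satisfies
`χ_C(X) (X − c) = χ_A(X) χ_B(X)`. -/
theorem smigoc_glue {p m : ℕ} (A1 : Matrix (Fin p) (Fin p) ℂ)
    (a b : Fin p → ℂ) (c : ℂ)
    (B : Matrix (Fin m) (Fin m) ℂ) (s t : Fin m → ℂ)
    (hs : B.mulVec s = c • s) (ht : t ᵥ* B = c • t) (hts : t ⬝ᵥ s = 1) :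
    (Matrix.fromBlocks A1 (vecMulVec a t) (vecMulVec s b) B).charpoly *
        (X - C c) =
      (Matrix.fromBlocks A1 (fun i _ => a i) (fun _ j => b j) (fun _ _ => c) :
          Matrix (Fin p ⊕ Unit) (Fin p ⊕ Unit) ℂ).charpoly * B.charpoly :=
  smigoc_glue_general A1 a b c B s t hs hts
end

section
/- Let λ₁, x, y, γ₁, γ₂, γ₃ be real numbers with x ≤ 0, √3·|x| ≥ |y|, γ₁, γ₂, γ₃ ≥ 0, and γ₁ + γ₂ + γ₃ = λ₁ + 2x. Then there exists a 3×3 entrywise nonnegative real matrix B with constant row sums λ₁ (B·e = λ₁·e), diagonal entries γ₁, γ₂, γ₃, and characteristic polynomial (X − λ₁)(X − (x+iy))(X − (x−iy)) over ℂ. -/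
open Polynomial Matrix

/-- Šmigoc-type 3 × 3 case with prescribed diagonal: if `x ≤ 0`, `√3·|x| ≥ |y|`,
`γ₁, γ₂, γ₃ ≥ 0` and `γ₁ + γ₂ + γ₃ = λ₁ + 2x`, then there is a nonnegative matrix
with constant row sums `λ₁`, diagonal `γ₁, γ₂, γ₃` and spectrum
`{λ₁, x + iy, x − iy}`. -/
theorem smigoc_3x3_prescribed_diagonal (lam1 x y γ1 γ2 γ3 : ℝ)
    (hx : x ≤ 0) (hxy : |y| ≤ Real.sqrt 3 * |x|)
    (h1 : 0 ≤ γ1) (h2 : 0 ≤ γ2) (h3 : 0 ≤ γ3)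
    (hsum : γ1 + γ2 + γ3 = lam1 + 2 * x) :
    ∃ B : Matrix (Fin 3) (Fin 3) ℝ,
      (∀ i j, 0 ≤ B i j) ∧
      (B.mulVec (fun _ => 1) = fun _ => lam1) ∧
      B 0 0 = γ1 ∧ B 1 1 = γ2 ∧ B 2 2 = γ3 ∧
      B.charpoly.map (algebraMap ℝ ℂ) =
        (X - C (lam1 : ℂ)) * (X - C ((x : ℂ) + (y : ℂ) * Complex.I)) *
          (X - C ((x : ℂ) - (y : ℂ) * Complex.I)) := by
  obtain ⟨a, b, ha, hb, hab, hprod⟩ :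
      ∃ a b : ℝ, 0 ≤ a ∧ 0 ≤ b ∧ a + b = -(2 * x) ∧ 3 * (a * b) = 3 * x ^ 2 - y ^ 2 := by
    have hs3 : (0:ℝ) < Real.sqrt 3 := Real.sqrt_pos.2 (by norm_num)
    have hs3sq : Real.sqrt 3 * Real.sqrt 3 = 3 := Real.mul_self_sqrt (by norm_num)
    have hax : |x| = -x := abs_of_nonpos hx
    have hy1 : y ≤ Real.sqrt 3 * (-x) := by
      calc y ≤ |y| := le_abs_self y
        _ ≤ _ := by rwa [hax] at hxy
    have hy2 : Real.sqrt 3 * x ≤ y := by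
      have := neg_abs_le y
      have h' : |y| ≤ Real.sqrt 3 * (-x) := by rwa [hax] at hxy
      nlinarith
    refine ⟨-x + y / Real.sqrt 3, -x - y / Real.sqrt 3, ?_, ?_, by ring, ?_⟩
    · have : x ≤ y / Real.sqrt 3 := by
        rw [le_div_iff₀ hs3]; nlinarith
      linarith
    · have : y / Real.sqrt 3 ≤ -x := by
        rw [div_le_iff₀ hs3]; nlinarith
      linarith
    · have h : y / Real.sqrt 3 * (y / Real.sqrt 3) = y ^ 2 / 3 := by
        rw [div_mul_div_comm, hs3sq, sq]
      have h3' : (3:ℝ) ≠ 0 := by norm_num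
      field_simp at h ⊢
      nlinarith [h]
  refine ⟨!![γ1, γ2 + a, γ3 + b; γ1 + b, γ2, γ3 + a; γ1 + a, γ2 + b, γ3],
    ?_, ?_, by simp, by simp, by simp, ?_⟩
  · intro i j
    fin_cases i <;> fin_cases j <;> simp <;> linarith
  · funext i
    fin_cases i <;>
      simp [Matrix.mulVec, dotProduct, Fin.sum_univ_three] <;> linarith
  · rw [← Matrix.charpoly_map, Matrix.charpoly, Matrix.det_fin_three]
    simp [charmatrix_apply, Matrix.diagonal_apply, Matrix.map_apply, map_add,
      Complex.coe_algebraMap, Complex.ofReal_add]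
    have r1 : a + b + 2 * x = 0 := by linarith
    have r2 : 3 * (a * b) - 3 * x ^ 2 + y ^ 2 = 0 := by linarith
    have r3 : γ1 + γ2 + γ3 - lam1 - 2 * x = 0 := by linarith
    have c1 : (a : ℂ) + (b : ℂ) + 2 * (x : ℂ) = 0 := by exact_mod_cast r1
    have c2 : 3 * ((a : ℂ) * (b : ℂ)) - 3 * (x : ℂ) ^ 2 + (y : ℂ) ^ 2 = 0 := by
      exact_mod_cast r2
    have c3 : (γ1 : ℂ) + (γ2 : ℂ) + (γ3 : ℂ) - (lam1 : ℂ) - 2 * (x : ℂ) = 0 := by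
      exact_mod_cast r3
    have h2C : (2 : ℂ[X]) = C 2 := (map_ofNat C 2).symm
    have h3C : (3 : ℂ[X]) = C 3 := (map_ofNat C 3).symm
    have e1 : (C (a : ℂ) + C (b : ℂ) + 2 * C (x : ℂ) : ℂ[X]) = 0 := by
      rw [h2C]; simp only [← C_pow, ← C_mul, ← C_add, ← C_sub]; rw [c1, map_zero]
    have e2 : (3 * (C (a : ℂ) * C (b : ℂ)) - 3 * C (x : ℂ) ^ 2 + C (y : ℂ) ^ 2 : ℂ[X]) = 0 := by
      rw [h3C]; simp only [← C_pow, ← C_mul, ← C_add, ← C_sub]; rw [c2, map_zero]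
    have e3 : (C (γ1 : ℂ) + C (γ2 : ℂ) + C (γ3 : ℂ) - C (lam1 : ℂ) - 2 * C (x : ℂ) : ℂ[X]) = 0 := by
      rw [h2C]; simp only [← C_pow, ← C_mul, ← C_add, ← C_sub]; rw [c3, map_zero]
    have e4 : (C Complex.I : ℂ[X]) ^ 2 = -1 := by
      rw [← C_pow, Complex.I_sq, map_neg, C_1]
    linear_combination
      (-X * (C (γ1 : ℂ) + C (γ2 : ℂ) + C (γ3 : ℂ)) - (C (x : ℂ) ^ 2 + C (y : ℂ) ^ 2) -
        (C (a : ℂ) + C (b : ℂ) - 2 * C (x : ℂ)) *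
          (C (γ1 : ℂ) + C (γ2 : ℂ) + C (γ3 : ℂ) + C (a : ℂ) + C (b : ℂ))) * e1 +
      (-X + C (γ1 : ℂ) + C (γ2 : ℂ) + C (γ3 : ℂ) + C (a : ℂ) + C (b : ℂ)) * e2 +
      (-X ^ 2 + 2 * C (x : ℂ) * X - (C (x : ℂ) ^ 2 + C (y : ℂ) ^ 2)) * e3 +
      ((X - C (lam1 : ℂ)) * C (y : ℂ) ^ 2) * e4
end

section
/- Let λ₁, x, y, γ₁, γ₂, γ₃ be real numbers with x ≤ 0, y² ≤ 3x², γ₁, γ₂, γ₃ ≥ 0, and γ₁ + γ₂ + γ₃ = λ₁ + 2x. Then: (a) γ_k ≤ λ₁ for each k = 1, 2, 3; and (b) γ₁γ₂ + γ₁γ₃ + γ₂γ₃ ≥ 2λ₁x + x² + y². (In other words, the list {λ₁, x+iy, x−iy} and the diagonal list {γ₁, γ₂, γ₃} satisfy conditions (i) and (iii) of the Perfect-type criterion, since λ₁λ₂ + λ₁λ₃ + λ₂λ₃ = 2λ₁x + x² + y² when λ₂ = x+iy, λ₃ = x−iy.) -/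
/-- For a Šmigoc-type pair `x ± iy` (`x ≤ 0`, `y² ≤ 3x²`) and nonnegative
`γ₁, γ₂, γ₃` with `γ₁ + γ₂ + γ₃ = λ₁ + 2x`, one has `γ_k ≤ λ₁` for each `k` and
`γ₁γ₂ + γ₁γ₃ + γ₂γ₃ ≥ 2λ₁x + x² + y²`. -/
theorem smigoc_perfect_conditions (lam1 x y γ1 γ2 γ3 : ℝ)
    (hx : x ≤ 0) (hxy : y ^ 2 ≤ 3 * x ^ 2)
    (h1 : 0 ≤ γ1) (h2 : 0 ≤ γ2) (h3 : 0 ≤ γ3)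
    (hsum : γ1 + γ2 + γ3 = lam1 + 2 * x) :
    (γ1 ≤ lam1 ∧ γ2 ≤ lam1 ∧ γ3 ≤ lam1) ∧
      2 * lam1 * x + x ^ 2 + y ^ 2 ≤ γ1 * γ2 + γ1 * γ3 + γ2 * γ3 := by
  refine ⟨⟨by nlinarith, by nlinarith, by nlinarith⟩, ?_⟩
  nlinarith [mul_nonneg h1 h2, mul_nonneg h1 h3, mul_nonneg h2 h3,
    mul_nonpos_of_nonneg_of_nonpos h1 hx, mul_nonpos_of_nonneg_of_nonpos h2 hx,
    mul_nonpos_of_nonneg_of_nonpos h3 hx]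
end

section
/- Let n ≥ 3 and let Λ = {λ₁, λ₂, …, λₙ} be a realizable multiset of complex numbers (there exists an n×n entrywise nonnegative real matrix whose characteristic polynomial over ℂ equals ∏ᵢ₌₁ⁿ (X − λᵢ)) with λ₁ real, the multiset {λ₂, …, λₙ} closed under complex conjugation, and for each i = 2, …, n: λᵢ is nonreal with Re λᵢ ≤ 0 and |Re λᵢ| < |Im λᵢ| ≤ √3·|Re λᵢ|. Let γ₁, …, γₙ be nonnegative real numbers with γ₁ + ⋯ + γₙ = λ₁ + ⋯ + λₙ. Then there exists an n×n entrywise nonnegative real matrix B whose characteristic polynomial over ℂ equals ∏ᵢ₌₁ⁿ (X − λᵢ) and whose multiset of diagonal entries is {γ₁, …, γₙ}. -/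
/-!
Take `B` with diagonal `γ`, ones on the subdiagonal, and last column `b`. Expanding along the first
row, `charpoly B = (X - γ₀) · charpoly B' - b₀`, so `charpoly B = f` once the `bᵢ` are minus the
remainders of the successive divisions of `f` by `X - γ₀, X - γ₁, …`; the degree and the trace
condition make the last quotient exactly `X - γₙ₋₁`.

Write `f = (X - λ₁) g`. Pairing conjugate eigenvalues makes `g` a product of real quadratics
`X² + cX + s` with `0 ≤ s ≤ c²` (this is `|Im λ| ≤ √3 |Re λ|`), so `g` is monic with nonnegative
coefficients and `aₖ ≤ a_{d-1} aₖ₊₁`. This class is closed under products and under division by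
`X - t` for `t ≥ 0`, where `a_{d-1}` grows by `t`; as long as `a_{d-1}` stays below `λ₁ - t`, which
is what `∑ γ = λ₁ - a_{d-1}` guarantees, every remainder is `≤ 0`.
-/

open Polynomial Matrix ComplexConjugate

namespace Polynomial

section Division

variable {R : Type*} [CommRing R] {p : R[X]}

lemma eval_eq_coeff_zero_add_mul_coeff_zero_divByMonic (p : R[X]) (t : R) :
    p.eval t = p.coeff 0 + t * (p /ₘ (X - C t)).coeff 0 := by
  have h := congrArg (coeff · 0) (modByMonic_add_div p (X - C t))
  simp only [modByMonic_X_sub_C_eq_C_eval, coeff_add, coeff_C_zero, mul_coeff_zero, coeff_sub,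
    coeff_X_zero] at h
  linear_combination h

lemma X_sub_C_mul_add_C_divByMonic (a r : R) (g : R[X]) (t : R) :
    ((X - C a) * g + C r) /ₘ (X - C t) = (X - C a) * (g /ₘ (X - C t)) + C (g.eval t) := by
  nontriviality R
  refine (div_modByMonic_unique _ (C ((t - a) * g.eval t + r)) (monic_X_sub_C t)
    ⟨?_, by rw [degree_X_sub_C]; exact degree_C_lt⟩).1
  have hg := modByMonic_add_div g (X - C t)
  rw [modByMonic_X_sub_C_eq_C_eval] at hg
  simp only [map_add, map_mul, map_sub]
  linear_combination (X - C a) * hg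

variable [Nontrivial R]

lemma natDegree_divByMonic_X_sub_C (p : R[X]) (t : R) :
    (p /ₘ (X - C t)).natDegree = p.natDegree - 1 := by
  rw [natDegree_divByMonic _ (monic_X_sub_C t), natDegree_X_sub_C]

lemma Monic.divByMonic_X_sub_C (hp : p.Monic) (hd : 0 < p.natDegree) (t : R) :
    (p /ₘ (X - C t)).Monic := by
  rw [Monic, leadingCoeff_divByMonic_of_monic (monic_X_sub_C t), hp.leadingCoeff]
  rw [degree_X_sub_C, degree_eq_natDegree hp.ne_zero]
  exact_mod_cast hd

lemma Monic.nextCoeff_divByMonic_X_sub_C (hp : p.Monic) (hd : 2 ≤ p.natDegree) (t : R) :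
    (p /ₘ (X - C t)).nextCoeff = p.nextCoeff + t := by
  have hq := natDegree_divByMonic_X_sub_C p t
  have hlead : (p /ₘ (X - C t)).coeff (p.natDegree - 1) = 1 := by
    rw [← hq]; exact (hp.divByMonic_X_sub_C (by omega) t).coeff_natDegree
  rw [nextCoeff_of_natDegree_pos (by omega), nextCoeff_of_natDegree_pos (by omega), hq,
    coeff_divByMonic_X_sub_C_rec, show p.natDegree - 1 - 1 + 1 = p.natDegree - 1 by omega,
    hlead, mul_one]

end Division

section Order

variable {R : Type*} [CommRing R] [LinearOrder R] {p q : R[X]} {t : R}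

def CoeffNonneg (p : R[X]) : Prop := ∀ k, 0 ≤ p.coeff k

structure RatioBounded (p : R[X]) : Prop where
  monic : p.Monic
  coeffNonneg : CoeffNonneg p
  coeff_le : ∀ k < p.natDegree, p.coeff k ≤ p.nextCoeff * p.coeff (k + 1)

namespace CoeffNonneg

lemma C {a : R} (ha : 0 ≤ a) : CoeffNonneg (Polynomial.C a) := fun k => by
  rw [coeff_C]; split_ifs <;> simp [ha]

lemma sub_C_coeff_zero (hp : CoeffNonneg p) : CoeffNonneg (p - Polynomial.C (p.coeff 0)) :=
  fun k => by cases k <;> simp [coeff_C, hp _]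

lemma sub_X_pow_natDegree (hp : CoeffNonneg p) (hm : p.Monic) :
    CoeffNonneg (p - X ^ p.natDegree) := fun k => by
  rw [coeff_sub, coeff_X_pow]
  split_ifs with h
  · simp [h, hm.coeff_natDegree]
  · simpa using hp k

lemma nextCoeff_nonneg (hp : CoeffNonneg p) : 0 ≤ p.nextCoeff := by
  rw [nextCoeff]; split_ifs
  · exact le_rfl
  · exact hp _

end CoeffNonneg

variable [IsStrictOrderedRing R]

namespace CoeffNonneg

lemma add (hp : CoeffNonneg p) (hq : CoeffNonneg q) : CoeffNonneg (p + q) := fun k => by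
  rw [coeff_add]; exact add_nonneg (hp k) (hq k)

lemma mul (hp : CoeffNonneg p) (hq : CoeffNonneg q) : CoeffNonneg (p * q) := fun k => by
  rw [coeff_mul]; exact Finset.sum_nonneg fun x _ => mul_nonneg (hp _) (hq _)

lemma X_pow (n : ℕ) : CoeffNonneg (X ^ n : R[X]) := fun k => by
  rw [coeff_X_pow]; split_ifs <;> simp

lemma eval_nonneg (hp : CoeffNonneg p) (ht : 0 ≤ t) : 0 ≤ p.eval t := by
  rw [eval_eq_sum_range]
  exact Finset.sum_nonneg fun k _ => mul_nonneg (hp k) (pow_nonneg ht k)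

lemma coeff_zero_le_eval (hp : CoeffNonneg p) (ht : 0 ≤ t) : p.coeff 0 ≤ p.eval t := by
  conv_rhs => rw [← X_mul_divX_add p]
  have : 0 ≤ p.divX.eval t := eval_nonneg (fun k => by rw [coeff_divX]; exact hp _) ht
  simp only [eval_add, eval_mul, eval_X, eval_C]
  exact le_add_of_nonneg_left (mul_nonneg ht this)

lemma divByMonic_X_sub_C (hp : CoeffNonneg p) (ht : 0 ≤ t) :
    CoeffNonneg (p /ₘ (X - Polynomial.C t)) := fun k => by
  rw [coeff_divByMonic_X_sub_C]
  exact Finset.sum_nonneg fun i _ => mul_nonneg (pow_nonneg ht _) (hp i)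

lemma coeff_succ_le_coeff_divByMonic (hp : CoeffNonneg p) (ht : 0 ≤ t) (k : ℕ) :
    p.coeff (k + 1) ≤ (p /ₘ (X - Polynomial.C t)).coeff k := by
  rw [coeff_divByMonic_X_sub_C_rec]
  exact le_add_of_nonneg_right (mul_nonneg ht (hp.divByMonic_X_sub_C ht _))

end CoeffNonneg

-- The ratio bound as coefficientwise nonnegativity of one polynomial, a form that multiplies well.
lemma forall_coeff_le_mul_coeff_succ_iff (hp : p.Monic) (c : R) :
    (∀ k < p.natDegree, p.coeff k ≤ c * p.coeff (k + 1)) ↔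
      CoeffNonneg (C c * (p - C (p.coeff 0)) - X * (p - X ^ p.natDegree)) := by
  constructor
  · rintro h (_ | k)
    · simp
    · simp only [coeff_sub, coeff_C_mul, coeff_X_mul, coeff_C_succ, coeff_X_pow, sub_zero,
        sub_nonneg]
      rcases lt_trichotomy k p.natDegree with hk | rfl | hk
      · simpa [hk.ne] using h k hk
      · simp [hp.coeff_natDegree]
      · simp [hk.ne', coeff_eq_zero_of_natDegree_lt, hk, hk.trans (Nat.lt_succ_self k)]
  · intro h k hk
    have := h (k + 1)
    simp only [coeff_sub, coeff_C_mul, coeff_X_mul, coeff_C_succ, coeff_X_pow, if_neg hk.ne,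
      sub_zero, sub_nonneg] at this
    exact this

namespace RatioBounded

lemma one : RatioBounded (1 : R[X]) :=
  ⟨monic_one, fun k => by rw [coeff_one]; split_ifs <;> simp, by simp⟩

lemma mul (hp : RatioBounded p) (hq : RatioBounded q) : RatioBounded (p * q) := by
  refine ⟨hp.monic.mul hq.monic, hp.coeffNonneg.mul hq.coeffNonneg, ?_⟩
  have hP := (forall_coeff_le_mul_coeff_succ_iff hp.monic _).1 hp.coeff_le
  have hQ := (forall_coeff_le_mul_coeff_succ_iff hq.monic _).1 hq.coeff_le
  have hp0 := hp.coeffNonneg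
  have hq0 := hq.coeffNonneg
  rw [forall_coeff_le_mul_coeff_succ_iff (hp.monic.mul hq.monic), hp.monic.nextCoeff_mul hq.monic,
    hp.monic.natDegree_mul hq.monic, mul_coeff_zero]
  -- Each summand on the right is a product of polynomials with nonnegative coefficients.
  have key : C (p.nextCoeff + q.nextCoeff) * (p * q - C (p.coeff 0 * q.coeff 0))
      - X * (p * q - X ^ (p.natDegree + q.natDegree))
      = (C p.nextCoeff * (p - C (p.coeff 0)) - X * (p - X ^ p.natDegree)) * q
        + C (p.nextCoeff * p.coeff 0) * (q - C (q.coeff 0))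
        + X ^ p.natDegree * (C q.nextCoeff * (q - C (q.coeff 0)) - X * (q - X ^ q.natDegree))
        + C q.nextCoeff * (p - X ^ p.natDegree) * (q - C (q.coeff 0))
        + C (q.nextCoeff * q.coeff 0) * (p - C (p.coeff 0)) := by
    simp only [map_add, map_mul]; ring
  rw [key]
  have hc := hp0.nextCoeff_nonneg
  have hd := hq0.nextCoeff_nonneg
  refine ((((hP.mul hq0).add ?_).add ((CoeffNonneg.X_pow _).mul hQ)).add ?_).add ?_
  · exact (CoeffNonneg.C (mul_nonneg hc (hp0 0))).mul hq0.sub_C_coeff_zero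
  · exact ((CoeffNonneg.C hd).mul (hp0.sub_X_pow_natDegree hp.monic)).mul hq0.sub_C_coeff_zero
  · exact (CoeffNonneg.C (mul_nonneg hd (hq0 0))).mul hp0.sub_C_coeff_zero

lemma multiset_prod {ι : Type*} (s : Multiset ι) (f : ι → R[X])
    (hf : ∀ i ∈ s, RatioBounded (f i)) : RatioBounded (s.map f).prod := by
  induction s using Multiset.induction with
  | empty => simpa using one
  | cons i s ih =>
    rw [Multiset.map_cons, Multiset.prod_cons]
    exact (hf i (Multiset.mem_cons_self i s)).mul
      (ih fun j hj => hf j (Multiset.mem_cons_of_mem hj))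

lemma quadratic {c s : R} (hc : 0 ≤ c) (hs : 0 ≤ s) (hsc : s ≤ c * c) :
    RatioBounded (X ^ 2 + C c * X + C s) := by
  have hdeg : (X ^ 2 + C c * X + C s).natDegree = 2 := by compute_degree!
  refine ⟨by monicity!, ?_, ?_⟩
  · intro k
    rcases k with _ | _ | _ | k <;> simp [coeff_X, coeff_C, coeff_X_pow, hc, hs]
  · rw [hdeg, nextCoeff_of_natDegree_pos (by rw [hdeg]; norm_num), hdeg]
    intro k hk
    interval_cases k <;> simp [coeff_X, coeff_C, coeff_X_pow, hsc]

lemma divByMonic_X_sub_C (hp : RatioBounded p) (ht : 0 ≤ t) (hd : 0 < p.natDegree) :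
    RatioBounded (p /ₘ (X - C t)) := by
  refine ⟨hp.monic.divByMonic_X_sub_C hd t, hp.coeffNonneg.divByMonic_X_sub_C ht, ?_⟩
  rw [natDegree_divByMonic_X_sub_C]
  intro k hk
  have hq0 := hp.coeffNonneg.divByMonic_X_sub_C ht
  rw [hp.monic.nextCoeff_divByMonic_X_sub_C (by omega), coeff_divByMonic_X_sub_C_rec]
  have := hp.coeff_le (k + 1) (by omega)
  have := hp.coeffNonneg.coeff_succ_le_coeff_divByMonic ht (k + 1)
  have := hp.coeffNonneg.nextCoeff_nonneg
  nlinarith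

lemma eval_le (hp : RatioBounded p) (ht : 0 ≤ t) (hd : 0 < p.natDegree) :
    p.eval t ≤ (p.nextCoeff + t) * (p /ₘ (X - C t)).coeff 0 := by
  rw [eval_eq_coeff_zero_add_mul_coeff_zero_divByMonic]
  have := hp.coeff_le 0 hd
  have := hp.coeffNonneg.coeff_succ_le_coeff_divByMonic ht 0
  have := hp.coeffNonneg.nextCoeff_nonneg
  nlinarith

lemma nextCoeff_divByMonic_X_sub_C_le (hp : RatioBounded p) (ht : 0 ≤ t) :
    (p /ₘ (X - C t)).nextCoeff ≤ p.nextCoeff + t := by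
  by_cases hd : 2 ≤ p.natDegree
  · exact (hp.monic.nextCoeff_divByMonic_X_sub_C hd t).le
  · rw [nextCoeff, if_pos (by rw [natDegree_divByMonic_X_sub_C]; omega)]
    exact add_nonneg hp.coeffNonneg.nextCoeff_nonneg ht

end RatioBounded

end Order

end Polynomial

section Hessenberg

variable {R : Type*} [CommRing R]

noncomputable def remainderSeq : {n : ℕ} → R[X] → (Fin n → R) → Fin n → R
  | 0, _, _ => Fin.elim0
  | _ + 1, f, γ => Fin.cons (f.eval (γ 0)) (remainderSeq (f /ₘ (X - C (γ 0))) (Fin.tail γ))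

@[simp] lemma remainderSeq_zero {n : ℕ} (f : R[X]) (γ : Fin (n + 1) → R) :
    remainderSeq f γ 0 = f.eval (γ 0) := rfl

@[simp] lemma remainderSeq_succ {n : ℕ} (f : R[X]) (γ : Fin (n + 1) → R) (i : Fin n) :
    remainderSeq f γ i.succ = remainderSeq (f /ₘ (X - C (γ 0))) (Fin.tail γ) i := rfl

def hessenbergMatrix {n : ℕ} (γ b : Fin n → R) : Matrix (Fin n) (Fin n) R :=
  Matrix.of fun i j =>
    if i = j then γ i else if (i : ℕ) = j + 1 then 1 else if (j : ℕ) + 1 = n then b i else 0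

lemma charmatrix_hessenbergMatrix_submatrix_succ {n : ℕ} (γ b : Fin (n + 1) → R) :
    (charmatrix (hessenbergMatrix γ b)).submatrix Fin.succ Fin.succ
      = charmatrix (hessenbergMatrix (Fin.tail γ) (Fin.tail b)) := by
  ext i j
  by_cases h : i = j
  · subst h; simp [hessenbergMatrix, Fin.tail]
  · rw [submatrix_apply, charmatrix_apply_ne _ _ _ (by simpa using h),
      charmatrix_apply_ne _ _ _ h]
    simp [hessenbergMatrix, Fin.tail, h]

lemma det_charmatrix_hessenbergMatrix_submatrix_succ_castSucc {n : ℕ} (γ b : Fin (n + 2) → R) :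
    ((charmatrix (hessenbergMatrix γ b)).submatrix Fin.succ Fin.castSucc).det = (-1) ^ (n + 1) := by
  rw [det_of_isUpperTriangular]
  · have hdiag (i : Fin (n + 1)) :
        (charmatrix (hessenbergMatrix γ b)).submatrix Fin.succ Fin.castSucc i i = -1 := by
      rw [submatrix_apply, charmatrix_apply_ne _ _ _ (Fin.castSucc_lt_succ (i := i)).ne']
      simp [hessenbergMatrix, (Fin.castSucc_lt_succ (i := i)).ne']
    simp only [submatrix_apply] at hdiag
    simp [hdiag]
  · intro i j hji
    have hij : (j : ℕ) < i := hji
    rw [submatrix_apply, charmatrix_apply_ne _ _ _ (by simp [Fin.ext_iff]; omega)]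
    simp only [hessenbergMatrix, of_apply, Fin.ext_iff, Fin.val_succ, Fin.val_castSucc]
    rw [if_neg (by omega), if_neg (by omega), if_neg (by omega), map_zero, neg_zero]

lemma charpoly_hessenbergMatrix_succ {n : ℕ} (γ b : Fin (n + 2) → R) :
    (hessenbergMatrix γ b).charpoly
      = (X - C (γ 0)) * (hessenbergMatrix (Fin.tail γ) (Fin.tail b)).charpoly - C (b 0) := by
  rw [Matrix.charpoly, det_succ_row_zero, Fin.sum_univ_succ, Finset.sum_eq_single (Fin.last n)]
  · rw [Fin.succAbove_zero, charmatrix_hessenbergMatrix_submatrix_succ, Fin.succ_last,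
      Fin.succAbove_last, det_charmatrix_hessenbergMatrix_submatrix_succ_castSucc,
      charmatrix_apply_ne _ _ _ (Fin.last_pos).ne, charmatrix_apply_eq, Matrix.charpoly]
    have hb : hessenbergMatrix γ b 0 (Fin.last (n + 1)) = b 0 := by simp [hessenbergMatrix]
    have hγ : hessenbergMatrix γ b 0 0 = γ 0 := by simp [hessenbergMatrix]
    have hsign : ((-1 : R[X]) ^ (n + 1)) * (-1) ^ (n + 1) = 1 := by rw [← mul_pow]; simp
    rw [hb, hγ, Fin.val_last, Fin.val_zero, pow_zero, one_mul, Nat.succ_eq_add_one]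
    linear_combination (-C (b 0)) * hsign
  · intro j _ hj
    have hj' : (j : ℕ) < n := Fin.val_lt_last hj
    rw [charmatrix_apply_ne _ _ _ (Fin.succ_ne_zero j).symm]
    have hb : hessenbergMatrix γ b 0 j.succ = 0 := by
      rw [hessenbergMatrix, of_apply, if_neg (Fin.succ_ne_zero j).symm, if_neg (by simp),
        if_neg (by simp; omega)]
    rw [hb, map_zero, neg_zero, mul_zero, zero_mul]
  · simp

theorem charpoly_hessenbergMatrix_remainderSeq [Nontrivial R] {n : ℕ} (γ : Fin (n + 1) → R)
    {f : R[X]} (hf : f.Monic) (hdeg : f.natDegree = n + 1) (hnext : f.nextCoeff = -∑ i, γ i) :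
    (hessenbergMatrix γ (-remainderSeq f γ)).charpoly = f := by
  induction n generalizing f with
  | zero =>
    have h0 : f.coeff 0 = -γ 0 := by
      rw [← Fin.sum_univ_one γ, ← hnext, nextCoeff_of_natDegree_pos (by omega), hdeg]
    rw [Matrix.charpoly, det_fin_one, charmatrix_apply_eq, hf.eq_X_add_C hdeg, h0]
    simp [hessenbergMatrix, sub_eq_add_neg]
  | succ m ih =>
    have hq := ih (Fin.tail γ) (hf.divByMonic_X_sub_C (by omega) (γ 0))
      (by rw [natDegree_divByMonic_X_sub_C, hdeg]; rfl)
      (by rw [hf.nextCoeff_divByMonic_X_sub_C (by omega), hnext, Fin.sum_univ_succ]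
          simp [Fin.tail])
    have htail : Fin.tail (-remainderSeq f γ) = -remainderSeq (f /ₘ (X - C (γ 0))) (Fin.tail γ) :=
      rfl
    rw [charpoly_hessenbergMatrix_succ, htail, hq, Pi.neg_apply, remainderSeq_zero, map_neg,
      sub_neg_eq_add, ← modByMonic_X_sub_C_eq_C_eval, add_comm]
    exact modByMonic_add_div f (X - C (γ 0))

variable [LinearOrder R] [IsStrictOrderedRing R]

lemma eval_X_sub_C_mul_add_C_nonpos {g : R[X]} (hg : CoeffNonneg g) {a c r t : R} (hc : 0 ≤ c)
    (hr : r ≤ c * g.coeff 0) (ht : 0 ≤ t) (hct : c + t ≤ a) : ((X - C a) * g + C r).eval t ≤ 0 := by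
  simp only [eval_add, eval_mul, eval_sub, eval_X, eval_C]
  have := hg.coeff_zero_le_eval ht
  have := hg.eval_nonneg ht
  nlinarith

/- Dividing `(X - a) g + r` by `X - t` leaves `(X - a) (g /ₘ (X - t)) + g(t)`, so the shape is kept,
with `c` raised to `c + t`, and `RatioBounded.eval_le` keeps the bound `r ≤ c g(0)`. -/
theorem remainderSeq_nonpos {n : ℕ} {g : R[X]} (hg : g.RatioBounded) (hn : n ≤ g.natDegree)
    {c r a : R} (hc : g.nextCoeff ≤ c) (hr : r ≤ c * g.coeff 0) {γ : Fin (n + 1) → R}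
    (hγ : ∀ i, 0 ≤ γ i) (hbudget : c + ∑ i, γ i ≤ a) (i : Fin (n + 1)) :
    remainderSeq ((X - C a) * g + C r) γ i ≤ 0 := by
  induction n generalizing g c r
  all_goals
    have hhead : remainderSeq ((X - C a) * g + C r) γ 0 ≤ 0 := by
      have := Finset.single_le_sum (fun j _ => hγ j) (Finset.mem_univ 0)
      exact eval_X_sub_C_mul_add_C_nonpos hg.coeffNonneg
        (hg.coeffNonneg.nextCoeff_nonneg.trans hc) hr (hγ 0) (by linarith)
  case zero => rwa [Fin.fin_one_eq_zero i]
  case succ m ih =>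
    refine Fin.cases hhead (fun j => ?_) i
    have ht := hγ 0
    rw [remainderSeq_succ, X_sub_C_mul_add_C_divByMonic]
    refine ih (c := c + γ 0) (hg.divByMonic_X_sub_C ht (by omega))
      (by rw [natDegree_divByMonic_X_sub_C]; omega)
      ((hg.nextCoeff_divByMonic_X_sub_C_le ht).trans (by linarith)) ?_ (fun _ => hγ _) ?_ j
    · exact (hg.eval_le ht (by omega)).trans <| mul_le_mul_of_nonneg_right (by linarith)
        (hg.coeffNonneg.divByMonic_X_sub_C ht 0)
    · rw [Fin.sum_univ_succ] at hbudget
      simpa [Fin.tail, add_assoc] using hbudget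

theorem hessenbergMatrix_remainderSeq_nonneg {n : ℕ} {g : R[X]} (hg : g.RatioBounded)
    (hn : n ≤ g.natDegree) {a : R} {γ : Fin (n + 1) → R} (hγ : ∀ i, 0 ≤ γ i)
    (hbudget : g.nextCoeff + ∑ i, γ i ≤ a) (i j : Fin (n + 1)) :
    0 ≤ hessenbergMatrix γ (-remainderSeq ((X - C a) * g) γ) i j := by
  have hrem : remainderSeq ((X - C a) * g) γ i ≤ 0 := by
    simpa using remainderSeq_nonpos hg hn le_rfl
      (mul_nonneg hg.coeffNonneg.nextCoeff_nonneg (hg.coeffNonneg 0)) hγ hbudget i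
  simp only [hessenbergMatrix, of_apply]
  split_ifs
  · exact hγ i
  · exact zero_le_one
  · exact neg_nonneg.2 hrem
  · exact le_rfl

end Hessenberg

lemma Multiset.exists_eq_bind_pair_of_map_eq {α : Type*} [DecidableEq α] {σ : α → α}
    (hσ : Function.Involutive σ) (M : Multiset α) (hM : M.map σ = M)
    (hfix : ∀ z ∈ M, σ z ≠ z) : ∃ P : Multiset α, M = P.bind fun z => {z, σ z} := by
  induction M using Multiset.strongInductionOn with
  | ih M ih =>
  rcases Multiset.empty_or_exists_mem M with rfl | ⟨z, hz⟩
  · exact ⟨0, rfl⟩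
  have hσz : σ z ∈ M.erase z := by
    rw [Multiset.mem_erase_of_ne (hfix z hz), ← hM]
    exact Multiset.mem_map_of_mem σ hz
  set M' := (M.erase z).erase (σ z)
  have hMM' : M = z ::ₘ σ z ::ₘ M' := by
    rw [Multiset.cons_erase hσz, Multiset.cons_erase hz]
  have hM' : M'.map σ = M' := by
    rw [Multiset.map_erase _ hσ.injective, Multiset.map_erase _ hσ.injective, hM, hσ z,
      Multiset.erase_comm]
  have hlt : M' < M := hMM' ▸ (Multiset.lt_cons_self _ _).trans (Multiset.lt_cons_self _ _)
  obtain ⟨P, hP⟩ := ih M' hlt hM' fun w hw => hfix w (Multiset.mem_of_le hlt.le hw)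
  exact ⟨z ::ₘ P, by rw [Multiset.cons_bind, ← hP, hMM']; simp⟩

noncomputable def conjPairPoly (z : ℂ) : ℝ[X] := X ^ 2 + C (-2 * z.re) * X + C (Complex.normSq z)

lemma map_conjPairPoly (z : ℂ) :
    (conjPairPoly z).map (algebraMap ℝ ℂ) = (X - C z) * (X - C (conj z)) := by
  have hre : (((-2 * z.re : ℝ)) : ℂ) = -(z + conj z) := by rw [Complex.add_conj]; push_cast; ring
  have hns : ((Complex.normSq z : ℝ) : ℂ) = z * conj z := (Complex.mul_conj z).symm
  rw [conjPairPoly, Polynomial.map_add, Polynomial.map_add, Polynomial.map_mul, Polynomial.map_pow,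
    map_X, Polynomial.map_C, Polynomial.map_C, Complex.coe_algebraMap, hre, hns]
  simp only [map_neg, map_add, map_mul]
  ring

lemma ratioBounded_conjPairPoly {z : ℂ} (hre : z.re ≤ 0) (him : |z.im| ≤ √3 * |z.re|) :
    (conjPairPoly z).RatioBounded := by
  have him2 : z.im ^ 2 ≤ 3 * z.re ^ 2 := by
    have := pow_le_pow_left₀ (abs_nonneg _) him 2
    rwa [mul_pow, Real.sq_sqrt (by norm_num), sq_abs, sq_abs] at this
  refine RatioBounded.quadratic (by linarith) (Complex.normSq_nonneg z) ?_
  rw [Complex.normSq_apply]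
  nlinarith

theorem exists_ratioBounded_map_eq_prod {M : Multiset ℂ} (hM : M.map conj = M)
    (hMG : ∀ z ∈ M, z.im ≠ 0 ∧ z.re ≤ 0 ∧ |z.im| ≤ √3 * |z.re|) :
    ∃ g : ℝ[X], g.RatioBounded ∧ g.map (algebraMap ℝ ℂ) = (M.map (X - C ·)).prod := by
  obtain ⟨P, hP⟩ := Multiset.exists_eq_bind_pair_of_map_eq Complex.conj_conj M hM
    fun z hz => mt Complex.conj_eq_iff_im.1 (hMG z hz).1
  refine ⟨(P.map conjPairPoly).prod, RatioBounded.multiset_prod _ _ fun z hz => ?_, ?_⟩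
  · obtain ⟨-, hre, him⟩ := hMG z (hP ▸ Multiset.mem_bind.2 ⟨z, hz, by simp⟩)
    exact ratioBounded_conjPairPoly hre him
  · rw [← coe_mapRingHom, map_multiset_prod, Multiset.map_map, hP, Multiset.map_bind,
      Multiset.prod_bind]
    exact congrArg _ (Multiset.map_congr rfl fun z _ => by simp [map_conjPairPoly])

lemma monic_natDegree_nextCoeff_of_map_eq_prod {ι : Type*} [Fintype ι] {p : ℝ[X]} {lam : ι → ℂ}
    (hp : p.map (algebraMap ℝ ℂ) = ∏ i, (X - C (lam i))) {γ : ι → ℝ}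
    (hsum : ∑ i, (γ i : ℂ) = ∑ i, lam i) :
    p.Monic ∧ p.natDegree = Fintype.card ι ∧ p.nextCoeff = -∑ i, γ i := by
  refine ⟨?_, ?_, ?_⟩
  · rw [← monic_map_iff (f := algebraMap ℝ ℂ), hp]
    exact monic_prod_of_monic _ _ fun i _ => monic_X_sub_C (lam i)
  · rw [← natDegree_map (algebraMap ℝ ℂ), hp, natDegree_finsetProd_X_sub_C_eq_card,
      Finset.card_univ]
  · apply (algebraMap ℝ ℂ).injective
    rw [← nextCoeff_map_eq, hp, prod_X_sub_C_nextCoeff, ← hsum]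
    simp

/-- Šmigoc-but-not-Suleimanova case: let `n ≥ 3`, let `{λ₁, …, λₙ}` be realizable,
with `λ₁` real, `{λ₂, …, λₙ}` closed under conjugation, and each `λᵢ` (`i ≥ 2`)
nonreal with `Re λᵢ ≤ 0` and `|Re λᵢ| < |Im λᵢ| ≤ √3·|Re λᵢ|`. If `γ₁, …, γₙ ≥ 0`
satisfy `∑ γᵢ = ∑ λᵢ`, then some nonnegative matrix has spectrum `{λ₁, …, λₙ}` and
diagonal entries `{γ₁, …, γₙ}` (as a multiset). -/
theorem smigoc_minus_suleimanova_prescribed_diagonal {n : ℕ} (hn : 3 ≤ n)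
    (lam : Fin n → ℂ) (γ : Fin n → ℝ)
    (hreal : (lam ⟨0, by omega⟩).im = 0)
    (hconj : (((Finset.univ : Finset (Fin n)).erase ⟨0, by omega⟩).val.map lam).map
          (starRingEnd ℂ)
        = ((Finset.univ : Finset (Fin n)).erase ⟨0, by omega⟩).val.map lam)
    (hG : ∀ i : Fin n, i ≠ ⟨0, by omega⟩ →
      (lam i).im ≠ 0 ∧ (lam i).re ≤ 0 ∧ |(lam i).re| < |(lam i).im| ∧
        |(lam i).im| ≤ Real.sqrt 3 * |(lam i).re|)
    (hγ : ∀ i, 0 ≤ γ i)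
    (hsum : (∑ i, (γ i : ℂ)) = ∑ i, lam i) :
    ∃ B : Matrix (Fin n) (Fin n) ℝ,
      (∀ i j, 0 ≤ B i j) ∧
      B.charpoly.map (algebraMap ℝ ℂ) = ∏ i, (X - C (lam i)) ∧
      Finset.univ.val.map (fun i => B i i) = Finset.univ.val.map γ := by
  obtain ⟨m, rfl⟩ : ∃ m, n = m + 1 := ⟨n - 1, by omega⟩
  simp only [Fin.zero_eta] at hreal hconj hG
  obtain ⟨g, hg, hgmap⟩ := exists_ratioBounded_map_eq_prod hconj fun z hz => by
    obtain ⟨i, hi, rfl⟩ := Multiset.mem_map.1 hz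
    obtain ⟨him, hre, -, hsec⟩ := hG i (Finset.ne_of_mem_erase (Finset.mem_def.2 hi))
    exact ⟨him, hre, hsec⟩
  set f := (X - C (lam 0).re) * g
  have hfmap : f.map (algebraMap ℝ ℂ) = ∏ i, (X - C (lam i)) := by
    have hlam0 : algebraMap ℝ ℂ (lam 0).re = lam 0 := Complex.ext (by simp) (by simp [hreal])
    rw [Polynomial.map_mul, Polynomial.map_sub, map_X, Polynomial.map_C, hlam0, hgmap,
      ← Finset.mul_prod_erase _ _ (Finset.mem_univ 0), Finset.prod_eq_multiset_prod,
      Multiset.map_map]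
    rfl
  obtain ⟨hfmonic, hfdeg, hfnext⟩ := monic_natDegree_nextCoeff_of_map_eq_prod hfmap hsum
  rw [Fintype.card_fin] at hfdeg
  have hgdeg : f.natDegree = 1 + g.natDegree := by
    rw [(monic_X_sub_C _).natDegree_mul hg.monic, natDegree_X_sub_C]
  have hgnext : f.nextCoeff = -(lam 0).re + g.nextCoeff := by
    rw [(monic_X_sub_C _).nextCoeff_mul hg.monic, nextCoeff_X_sub_C]
  refine ⟨hessenbergMatrix γ (-remainderSeq f γ),
    hessenbergMatrix_remainderSeq_nonneg hg (by omega) hγ (by linarith), ?_,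
    Multiset.map_congr rfl fun i _ => by simp [hessenbergMatrix]⟩
  rw [charpoly_hessenbergMatrix_remainderSeq γ hfmonic hfdeg hfnext, hfmap]
end
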